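/- arXiv:1912.00049 — 9 statements merged into one kernel-verified Lean document; each statement's English description precedes it below -/
import Mathlib

section
/- Let ε > 0, let c ≥ 1 be a number of channels and let ν_old : P × Fin c → ℝ be a perturbation indexed by a finite set of pixels P and channels, with ‖ν_old‖₂ ≤ ε. Let W₁, W₂ ⊆ P be disjoint sets of pixels, and set ε_unused² = ε² − ‖ν_old‖₂². Suppose ν : P × Fin c → ℝ satisfies: (i) ν agrees with ν_old on all pixels outside W₁ ∪ W₂ (in every channel); (ii) ν vanishes on W₂ (in every channel); (iii) for every channel i, the squared ℓ₂-norm of the restriction of ν to W₁ × {i} equals the squared ℓ₂-norm of the restriction of ν_old to (W₁ ∪ W₂) × {i} plus ε_unused²/c. Then ‖ν‖₂ = ε. -/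
/-! Outside `W₁ ∪ W₂` the update changes nothing and `W₂` carries no mass afterwards, while summing
the per-channel condition over the `c` channels adds exactly `ε² - ‖ν_old‖₂²` to the mass of
`ν_old` on `W₁ ∪ W₂`. Hence `‖ν‖₂² = ‖ν_old‖₂² + (ε² - ‖ν_old‖₂²) = ε²`. -/

open Finset

section
variable {P ι M : Type*} [Fintype ι]

theorem sum_sum_sub_sum_sum_eq_of_eqOn_compl [Fintype P] [AddCommGroup M] (U : Finset P) {F G : P → ι → M}
    (h : ∀ p ∉ U, ∀ i, F p i = G p i) :
    ∑ p, ∑ i, F p i - ∑ p, ∑ i, G p i = ∑ p ∈ U, ∑ i, F p i - ∑ p ∈ U, ∑ i, G p i := by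
  classical
  rw [← sum_add_sum_compl U, ← sum_add_sum_compl U (fun p => ∑ i, G p i),
    sum_congr rfl fun p hp => sum_congr rfl fun i _ => h p (mem_compl.mp hp) i]
  abel

theorem sum_union_sum_eq_sum_sum_of_eq_zero [DecidableEq P] [AddCommMonoid M] {W₁ W₂ : Finset P}
    (hdisj : Disjoint W₁ W₂) {F : P → ι → M} (hzero : ∀ p ∈ W₂, ∀ i, F p i = 0) :
    ∑ p ∈ W₁ ∪ W₂, ∑ i, F p i = ∑ i, ∑ p ∈ W₁, F p i := by
  rw [sum_union hdisj, sum_eq_zero fun p hp => sum_eq_zero fun i _ => hzero p hp i, add_zero,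
    sum_comm]

end

theorem Fintype.sum_add_div_card {ι K : Type*} [Fintype ι] [Nonempty ι] [Semifield K] [CharZero K]
    (a : ι → K) (δ : K) :
    ∑ i, (a i + δ / Fintype.card ι) = ∑ i, a i + δ := by
  rw [sum_add_distrib, sum_const, card_univ, nsmul_eq_mul,
    mul_div_cancel₀ _ (Nat.cast_ne_zero.mpr Fintype.card_ne_zero)]

theorem square_attack_l2_update_norm_general
    (P : Type*) [Fintype P] [DecidableEq P] (c : ℕ) (hc : 1 ≤ c)
    (ε : ℝ) (hε : 0 < ε)
    (νold ν : P × Fin c → ℝ)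
    (W₁ W₂ : Finset P) (hdisj : Disjoint W₁ W₂)
    (hagree : ∀ p : P, p ∉ W₁ ∪ W₂ → ∀ i : Fin c, ν (p, i) = νold (p, i))
    (hzero : ∀ p ∈ W₂, ∀ i : Fin c, ν (p, i) = 0)
    (hnorm : ∀ i : Fin c,
      ∑ p ∈ W₁, (ν (p, i)) ^ 2 =
        ∑ p ∈ W₁ ∪ W₂, (νold (p, i)) ^ 2 +
          (ε ^ 2 - ∑ p : P, ∑ j : Fin c, (νold (p, j)) ^ 2) / c) :
    Real.sqrt (∑ p : P, ∑ i : Fin c, (ν (p, i)) ^ 2) = ε := by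
  have : Nonempty (Fin c) := ⟨⟨0, hc⟩⟩
  have hW : ∑ p ∈ W₁ ∪ W₂, ∑ i, ν (p, i) ^ 2 =
      ∑ p ∈ W₁ ∪ W₂, ∑ i, νold (p, i) ^ 2 + (ε ^ 2 - ∑ p, ∑ j, νold (p, j) ^ 2) := by
    rw [sum_union_sum_eq_sum_sum_of_eq_zero hdisj fun p hp i => by simp [hzero p hp i],
      sum_congr rfl fun i _ => hnorm i, sum_comm (s := W₁ ∪ W₂)]
    simpa only [Fintype.card_fin] using
      Fintype.sum_add_div_card (fun i : Fin c => ∑ p ∈ W₁ ∪ W₂, νold (p, i) ^ 2)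
        (ε ^ 2 - ∑ p, ∑ j, νold (p, j) ^ 2)
  have hsq : ∑ p, ∑ i, ν (p, i) ^ 2 = ε ^ 2 := by
    have hdiff := sum_sum_sub_sum_sum_eq_of_eqOn_compl (W₁ ∪ W₂) (F := fun p i => ν (p, i) ^ 2)
      (G := fun p i => νold (p, i) ^ 2) fun p hp i => by rw [hagree p hp i]
    linarith
  rw [hsq, Real.sqrt_sq hε.le]

/-- Proposition 1 (correctness of the `l₂`-Square Attack update): if the new perturbation `ν`
agrees with `ν_old` outside `W₁ ∪ W₂`, vanishes on `W₂`, and in each channel the squared norm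
on `W₁` equals the squared norm of `ν_old` on `W₁ ∪ W₂` plus `ε_unused²/c`, then `‖ν‖₂ = ε`. -/
theorem square_attack_l2_update_norm
    (P : Type*) [Fintype P] [DecidableEq P] (c : ℕ) (hc : 1 ≤ c)
    (ε : ℝ) (hε : 0 < ε)
    (νold ν : P × Fin c → ℝ)
    (hold : Real.sqrt (∑ p : P, ∑ i : Fin c, (νold (p, i)) ^ 2) ≤ ε)
    (W₁ W₂ : Finset P) (hdisj : Disjoint W₁ W₂)
    (hagree : ∀ p : P, p ∉ W₁ ∪ W₂ → ∀ i : Fin c, ν (p, i) = νold (p, i))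
    (hzero : ∀ p ∈ W₂, ∀ i : Fin c, ν (p, i) = 0)
    (hnorm : ∀ i : Fin c,
      ∑ p ∈ W₁, (ν (p, i)) ^ 2 =
        ∑ p ∈ W₁ ∪ W₂, (νold (p, i)) ^ 2 +
          (ε ^ 2 - ∑ p : P, ∑ j : Fin c, (νold (p, j)) ^ 2) / c) :
    Real.sqrt (∑ p : P, ∑ i : Fin c, (ν (p, i)) ^ 2) = ε :=
  square_attack_l2_update_norm_general P c hc ε hε νold ν W₁ W₂ hdisj hagree hzero hnorm
end

section
/- Let g : ℝ^d → ℝ be differentiable with L-Lipschitz gradient (L-smooth), let T ≥ 1 be an integer, γ > 0, C > 0, C̃ > 0, and set γ_t = γ/√T for all t. On a probability space let δ_0, …, δ_T be independent random vectors in ℝ^d, let x_0 ∈ ℝ^d be deterministic, and define recursively x_{t+1} = x_t + δ_t if g(x_t + δ_t) < g(x_t) and x_{t+1} = x_t otherwise. Assume for every t: E[δ_t] = 0, E[‖δ_t‖₂²] ≤ γ_t² C, E[|⟨δ_t, v⟩|] ≥ C̃ γ_t ‖v‖₂ for every fixed v ∈ ℝ^d, and that g(x_t), ‖∇g(x_t)‖₂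 and ‖δ_t‖₂² are integrable. Then min_{t = 0,…,T} E[‖∇g(x_t)‖₂] ≤ (2/(γ C̃ √T)) · ( g(x_0) − E[g(x_{T+1})] + γ² C L / 2 ). -/
open MeasureTheory ProbabilityTheory Finset
open scoped RealInnerProductSpace

/-!
By the descent lemma for an `L`-smooth `g`, rejecting every non-improving step keeps only the
negative part of the first-order term: `g x_{t+1} ≤ g x_t + min ⟪∇g x_t, δ_t⟫ 0 + L ‖δ_t‖² / 2`.
The iterate `x_t` is a function of `δ_0, …, δ_{t-1}`, hence independent of `δ_t`. So
`⟪∇g x_t, δ_t⟫` has mean zero, and `E (min a 0) = -E |a| / 2 ≤ -C̃ γ_t E ‖∇g x_t‖ / 2`.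
Summing over `t < T` telescopes; the minimum is at most the average, and the last step does not
increase `g`.
-/

section Smooth

variable {E : Type*} [NormedAddCommGroup E] [InnerProductSpace ℝ E] [CompleteSpace E]
  {g : E → ℝ} {L : ℝ}

theorem continuous_gradient_of_lipschitz
    (hlip : ∀ a b : E, ‖gradient g a - gradient g b‖ ≤ L * ‖a - b‖) :
    Continuous (gradient g) :=
  (LipschitzWith.of_dist_le_mul fun a b => by
    simpa only [dist_eq_norm] using (hlip a b).trans
      (mul_le_mul_of_nonneg_right (Real.le_coe_toNNReal L) (norm_nonneg _))).continuous

theorem image_add_le_of_lipschitz_gradient (hg : Differentiable ℝ g)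
    (hlip : ∀ a b : E, ‖gradient g a - gradient g b‖ ≤ L * ‖a - b‖) (x v : E) :
    g (x + v) ≤ g x + ⟪gradient g x, v⟫ + L / 2 * ‖v‖ ^ 2 := by
  set ψ : ℝ → ℝ := fun s =>
    g (x + s • v) - s * ⟪gradient g x, v⟫ - L / 2 * s ^ 2 * ‖v‖ ^ 2
  have hψ : ∀ s : ℝ, HasDerivAt ψ
      (⟪gradient g (x + s • v) - gradient g x, v⟫ - L * s * ‖v‖ ^ 2) s := by
    intro s
    have hline : HasDerivAt (fun s : ℝ => x + s • v) v s := by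
      simpa using ((hasDerivAt_id s).smul_const v).const_add x
    have hcomp := (hg (x + s • v)).hasGradientAt.hasFDerivAt.comp_hasDerivAt s hline
    rw [InnerProductSpace.toDual_apply_apply] at hcomp
    refine ((hcomp.sub ((hasDerivAt_id s).mul_const ⟪gradient g x, v⟫)).sub
      ((((hasDerivAt_id s).pow 2).const_mul (L / 2)).mul_const (‖v‖ ^ 2))).congr_deriv ?_
    simp only [inner_sub_left, id, Nat.cast_ofNat]
    ring
  have hψ_nonpos : ∀ s ∈ interior (Set.Icc (0 : ℝ) 1),
      ⟪gradient g (x + s • v) - gradient g x, v⟫ - L * s * ‖v‖ ^ 2 ≤ 0 := by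
    intro s hs
    rw [interior_Icc] at hs
    have := calc ⟪gradient g (x + s • v) - gradient g x, v⟫
        ≤ ‖gradient g (x + s • v) - gradient g x‖ * ‖v‖ := real_inner_le_norm _ _
      _ ≤ L * ‖s • v‖ * ‖v‖ := by
          gcongr
          simpa using hlip (x + s • v) x
      _ = L * s * ‖v‖ ^ 2 := by rw [norm_smul, Real.norm_of_nonneg hs.1.le]; ring
    linarith
  have hanti := antitoneOn_of_hasDerivWithinAt_nonpos (convex_Icc 0 1)
    (HasDerivAt.continuousOn fun s _ => hψ s) (fun s _ => (hψ s).hasDerivWithinAt) hψ_nonpos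
  have := hanti (Set.left_mem_Icc.mpr zero_le_one) (Set.right_mem_Icc.mpr zero_le_one)
    zero_le_one
  simp only [ψ, one_smul, zero_smul, add_zero] at this
  linarith

end Smooth

section AcceptStep

variable {E : Type*} {g : E → ℝ}

noncomputable def acceptStep [Add E] (g : E → ℝ) (y v : E) : E :=
  if g (y + v) < g y then y + v else y

theorem image_acceptStep_le_self [Add E] (y v : E) : g (acceptStep g y v) ≤ g y := by
  unfold acceptStep
  split_ifs with h
  · exact h.le
  · exact le_rfl

-- `(a - |a|) / 2 = min a 0`
theorem image_acceptStep_le [NormedAddCommGroup E] [InnerProductSpace ℝ E] [CompleteSpace E]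
    {L : ℝ} (hL : 0 ≤ L) (hg : Differentiable ℝ g)
    (hlip : ∀ a b : E, ‖gradient g a - gradient g b‖ ≤ L * ‖a - b‖) (y v : E) :
    g (acceptStep g y v) ≤
      g y + (⟪gradient g y, v⟫ - |⟪gradient g y, v⟫|) / 2 + L / 2 * ‖v‖ ^ 2 := by
  have hdescent := image_add_le_of_lipschitz_gradient hg hlip y v
  have hquad : 0 ≤ L / 2 * ‖v‖ ^ 2 := by positivity
  unfold acceptStep
  rcases le_or_gt 0 ⟪gradient g y, v⟫ with hpos | hneg
  · rw [abs_of_nonneg hpos]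
    split_ifs with h <;> linarith
  · rw [abs_of_neg hneg]
    split_ifs with h <;> linarith

theorem Measurable.acceptStep [Add E] [MeasurableSpace E] [MeasurableAdd₂ E]
    (hg : Measurable g) :
    Measurable fun p : E × E => acceptStep g p.1 p.2 :=
  Measurable.ite (measurableSet_lt (hg.comp (measurable_fst.add measurable_snd))
    (hg.comp measurable_fst)) (measurable_fst.add measurable_snd) measurable_fst

end AcceptStep

namespace ProbabilityTheory

theorem iIndepFun.indepFun_of_measurable_biSup {Ω ι β γ : Type*} {mΩ : MeasurableSpace Ω}
    {μ : Measure Ω} [mβ : MeasurableSpace β] [MeasurableSpace γ] {δ : ι → Ω → β}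
    (h : iIndepFun δ μ) (hδ : ∀ i, Measurable (δ i)) {S : Set ι} {j : ι} (hj : j ∉ S)
    {X : Ω → γ} (hX : Measurable[⨆ i ∈ S, mβ.comap (δ i)] X) : X ⟂ᵢ[μ] δ j := by
  rw [IndepFun_iff_Indep]
  have := indep_iSup_of_disjoint (fun i => (hδ i).comap_le)
    ((iIndepFun_iff_iIndep _ _ _).mp h) (Set.disjoint_singleton_right.mpr hj)
  exact indep_of_indep_of_le_right (indep_of_indep_of_le_left this hX.comap_le)
    (le_iSup₂ (f := fun i (_ : i ∈ ({j} : Set ι)) => mβ.comap (δ i)) j rfl)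

variable {Ω E : Type*} {mΩ : MeasurableSpace Ω} {μ : Measure Ω}
  [NormedAddCommGroup E] [InnerProductSpace ℝ E] [MeasurableSpace E] [BorelSpace E] {X Y : Ω → E}

theorem IndepFun.integral_inner_eq_zero [CompleteSpace E] (hXY : X ⟂ᵢ[μ] Y)
    (hX : Integrable X μ) (hY : Integrable Y μ) (hY0 : ∫ ω, Y ω ∂μ = 0) :
    ∫ ω, ⟪X ω, Y ω⟫ ∂μ = 0 := by
  have h := hXY.integral_bilin hX hY (innerSL ℝ)
  rwa [hY0, map_zero] at h

theorem IndepFun.mul_integral_norm_le_integral_abs_inner [IsFiniteMeasure μ]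
    [SecondCountableTopology E] (hXY : X ⟂ᵢ[μ] Y)
    (hX : Integrable X μ) (hY : Integrable Y μ) {c : ℝ}
    (hc : ∀ v, c * ‖v‖ ≤ ∫ ω, |⟪Y ω, v⟫| ∂μ) :
    c * ∫ ω, ‖X ω‖ ∂μ ≤ ∫ ω, |⟪X ω, Y ω⟫| ∂μ := by
  have hXm := hX.aemeasurable
  have hYm := hY.aemeasurable
  have habs : Continuous fun p : E × E => |⟪p.1, p.2⟫| := by fun_prop
  have hint : Integrable (fun p : E × E => |⟪p.1, p.2⟫|) ((μ.map X).prod (μ.map Y)) := by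
    rw [← hXY.map_prod_eq_prod_map_map hXm hYm,
      integrable_map_measure habs.aestronglyMeasurable (hXm.prodMk hYm)]
    exact (hXY.integrable_bilin hX hY (innerSL ℝ)).abs
  have hfiber : ∀ a, c * ‖a‖ ≤ ∫ b, |⟪a, b⟫| ∂(μ.map Y) := fun a => by
    rw [integral_map hYm (by fun_prop)]
    simpa only [real_inner_comm a] using hc a
  calc c * ∫ ω, ‖X ω‖ ∂μ = ∫ a, c * ‖a‖ ∂(μ.map X) := by
        rw [integral_const_mul, integral_map hXm (by fun_prop)]
    _ ≤ ∫ a, ∫ b, |⟪a, b⟫| ∂(μ.map Y) ∂(μ.map X) :=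
        integral_mono (((integrable_map_measure (by fun_prop) hXm).mpr hX.norm).const_mul c)
          hint.integral_prod_left hfiber
    _ = ∫ ω, |⟪X ω, Y ω⟫| ∂μ := by
        rw [← integral_prod _ hint, ← hXY.map_prod_eq_prod_map_map hXm hYm,
          integral_map (hXm.prodMk hYm) habs.aestronglyMeasurable]

end ProbabilityTheory

section Iterates

variable {Ω E : Type*} [Add E] [mE : MeasurableSpace E] [MeasurableAdd₂ E] {g : E → ℝ}
  {N : ℕ} {δ : Fin N → Ω → E} {x : ℕ → Ω → E} {x0 : E}

theorem measurable_iterate_biSup_comap (hg : Measurable g) (hx0 : ∀ ω, x 0 ω = x0)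
    (hxrec : ∀ t : Fin N, ∀ ω, x (t + 1) ω = acceptStep g (x t ω) (δ t ω)) :
    ∀ n ≤ N, Measurable[⨆ i ∈ {i : Fin N | (i : ℕ) < n}, mE.comap (δ i)] (x n) := by
  intro n
  induction n with
  | zero =>
    intro _
    rw [funext hx0]
    exact measurable_const
  | succ n ih =>
    intro hn
    set past := fun m : ℕ => ⨆ i ∈ {i : Fin N | (i : ℕ) < m}, mE.comap (δ i)
    have hmono : past n ≤ past (n + 1) :=
      biSup_mono fun i (hi : (i : ℕ) < n) => (Nat.lt_succ_of_lt hi : (i : ℕ) < n + 1)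
    have hn' : n < N := hn
    have hδn : Measurable[past (n + 1)] (δ ⟨n, hn'⟩) :=
      measurable_iff_comap_le.mpr <| le_iSup₂
        (f := fun i (_ : i ∈ {i : Fin N | (i : ℕ) < n + 1}) => mE.comap (δ i))
        ⟨n, hn'⟩ (Nat.lt_succ_self n)
    rw [funext (hxrec ⟨n, hn'⟩)]
    exact hg.acceptStep.comp (((ih hn'.le).mono hmono le_rfl).prodMk hδn)

variable {mΩ : MeasurableSpace Ω}

theorem measurable_iterate (hg : Measurable g) (hδ : ∀ i, Measurable (δ i))
    (hx0 : ∀ ω, x 0 ω = x0)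
    (hxrec : ∀ t : Fin N, ∀ ω, x (t + 1) ω = acceptStep g (x t ω) (δ t ω)) {n : ℕ}
    (hn : n ≤ N) : Measurable (x n) :=
  (measurable_iterate_biSup_comap hg hx0 hxrec n hn).mono
    (iSup₂_le fun i _ => (hδ i).comap_le) le_rfl

theorem indepFun_iterate {μ : Measure Ω} (hindep : iIndepFun δ μ) (hδ : ∀ i, Measurable (δ i))
    (hg : Measurable g) (hx0 : ∀ ω, x 0 ω = x0)
    (hxrec : ∀ t : Fin N, ∀ ω, x (t + 1) ω = acceptStep g (x t ω) (δ t ω)) (t : Fin N) :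
    x t ⟂ᵢ[μ] δ t :=
  hindep.indepFun_of_measurable_biSup hδ (lt_irrefl (t : ℕ))
    (measurable_iterate_biSup_comap hg hx0 hxrec t t.is_le')

end Iterates

section OneStep

variable {Ω E : Type*} {g : E → ℝ} {mΩ : MeasurableSpace Ω} {μ : Measure Ω} [IsFiniteMeasure μ]
  [NormedAddCommGroup E] [InnerProductSpace ℝ E] [CompleteSpace E] [MeasurableSpace E]
  [BorelSpace E] [SecondCountableTopology E] {L : ℝ} {X : Ω → E}

theorem integral_image_acceptStep_le (hL : 0 ≤ L) (hg : Differentiable ℝ g)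
    (hlip : ∀ a b : E, ‖gradient g a - gradient g b‖ ≤ L * ‖a - b‖) {D : Ω → E}
    (hXD : X ⟂ᵢ[μ] D) (hX : Measurable X) (hD : Measurable D) (hD0 : ∫ ω, D ω ∂μ = 0)
    {c : ℝ} (hc : ∀ v, c * ‖v‖ ≤ ∫ ω, |⟪D ω, v⟫| ∂μ)
    {X' : Ω → E} (hX' : ∀ ω, X' ω = acceptStep g (X ω) (D ω))
    (hgX : Integrable (fun ω => g (X ω)) μ) (hgX' : Integrable (fun ω => g (X' ω)) μ)
    (hgrad : Integrable (fun ω => ‖gradient g (X ω)‖) μ)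
    (hD2 : Integrable (fun ω => ‖D ω‖ ^ 2) μ) :
    c * ∫ ω, ‖gradient g (X ω)‖ ∂μ ≤
      2 * (∫ ω, g (X ω) ∂μ - ∫ ω, g (X' ω) ∂μ) +
        L * ∫ ω, ‖D ω‖ ^ 2 ∂μ := by
  have hgrad_cont := continuous_gradient_of_lipschitz hlip
  have hG : Integrable (fun ω => gradient g (X ω)) μ :=
    (integrable_norm_iff
      (hgrad_cont.comp_aestronglyMeasurable hX.aestronglyMeasurable)).mp hgrad
  have hDi : Integrable D μ :=
    ((memLp_two_iff_integrable_sq_norm hD.aestronglyMeasurable).mpr hD2).integrable one_le_two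
  have hGD : (fun ω => gradient g (X ω)) ⟂ᵢ[μ] D := hXD.comp hgrad_cont.measurable measurable_id
  have hinner : Integrable (fun ω => ⟪gradient g (X ω), D ω⟫) μ :=
    hGD.integrable_bilin hG hDi (innerSL ℝ)
  have hdrift : Integrable
      (fun ω => (⟪gradient g (X ω), D ω⟫ - |⟪gradient g (X ω), D ω⟫|) / 2) μ :=
    (hinner.sub hinner.abs).div_const 2
  have hquad : Integrable (fun ω => L / 2 * ‖D ω‖ ^ 2) μ := hD2.const_mul _
  have hdescent : Integrable (fun ω => g (X ω) +
      (⟪gradient g (X ω), D ω⟫ - |⟪gradient g (X ω), D ω⟫|) / 2) μ := hgX.add hdrift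
  have hexpect : ∫ ω, (g (X ω) + (⟪gradient g (X ω), D ω⟫ - |⟪gradient g (X ω), D ω⟫|) / 2 +
      L / 2 * ‖D ω‖ ^ 2) ∂μ =
      ∫ ω, g (X ω) ∂μ - (∫ ω, |⟪gradient g (X ω), D ω⟫| ∂μ) / 2 +
        L / 2 * ∫ ω, ‖D ω‖ ^ 2 ∂μ := by
    rw [integral_add hdescent hquad, integral_add hgX hdrift, integral_div,
      integral_sub hinner hinner.abs, integral_const_mul,
      hGD.integral_inner_eq_zero hG hDi hD0]
    ring
  have hbound : ∫ ω, g (X' ω) ∂μ ≤ ∫ ω, g (X ω) ∂μ -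
      (∫ ω, |⟪gradient g (X ω), D ω⟫| ∂μ) / 2 + L / 2 * ∫ ω, ‖D ω‖ ^ 2 ∂μ := by
    rw [← hexpect]
    refine integral_mono hgX' (hdescent.add hquad) fun ω => ?_
    simpa only [hX'] using image_acceptStep_le hL hg hlip (X ω) (D ω)
  linarith [hGD.mul_integral_norm_le_integral_abs_inner hG hDi hc]

end OneStep

theorem mul_inf'_range_le_of_le_sub_add {a b : ℕ → ℝ} {c K : ℝ} {T : ℕ} (hc : 0 ≤ c)
    (h : ∀ t < T, c * a t ≤ b t - b (t + 1) + K) :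
    c * (T * (range (T + 1)).inf' nonempty_range_add_one a) ≤ b 0 - b T + T * K := by
  set m := (range (T + 1)).inf' nonempty_range_add_one a
  have hmin : T * m ≤ ∑ t ∈ range T, a t := by
    simpa using card_nsmul_le_sum (range T) a m fun t ht =>
      inf'_le a (mem_range.mpr (Nat.lt_succ_of_lt (mem_range.mp ht)))
  calc c * (T * m) ≤ ∑ t ∈ range T, c * a t := by
        rw [← mul_sum]; exact mul_le_mul_of_nonneg_left hmin hc
    _ ≤ ∑ t ∈ range T, (b t - b (t + 1) + K) :=
        sum_le_sum fun t ht => h t (mem_range.mp ht)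
    _ = b 0 - b T + T * K := by
        rw [sum_add_distrib, sum_range_sub', sum_const, card_range, nsmul_eq_mul]

/-- Proposition 2: convergence of the random search scheme underlying the Square Attack.
For an `L`-smooth `g`, independent zero-mean random updates `δ_0, …, δ_T` with
`E‖δ_t‖² ≤ γ_t² C` and `E|⟨δ_t, v⟩| ≥ C̃ γ_t ‖v‖` for every fixed `v`, where `γ_t = γ/√T`,
and the accept-only-if-improving iteration `x_{t+1} = x_t + δ_t` if `g(x_t + δ_t) < g(x_t)`
else `x_t`, we have
`min_{t=0..T} E‖∇g(x_t)‖ ≤ (2/(γ C̃ √T)) (g(x_0) − E g(x_{T+1}) + γ² C L / 2)`. -/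
theorem random_search_convergence
    (d : ℕ) (L γ C Ct : ℝ) (hL : 0 ≤ L) (hγ : 0 < γ) (hCt : 0 < Ct)
    (T : ℕ) (hT : 1 ≤ T)
    (g : EuclideanSpace ℝ (Fin d) → ℝ)
    (hg : Differentiable ℝ g)
    (hlip : ∀ a b : EuclideanSpace ℝ (Fin d),
      ‖gradient g a - gradient g b‖ ≤ L * ‖a - b‖)
    {Ω : Type*} [MeasurableSpace Ω] (μ : Measure Ω) [IsProbabilityMeasure μ]
    (δ : Fin (T + 1) → Ω → EuclideanSpace ℝ (Fin d))
    (hδmeas : ∀ t, Measurable (δ t))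
    (hindep : iIndepFun δ μ)
    (x0 : EuclideanSpace ℝ (Fin d))
    (x : ℕ → Ω → EuclideanSpace ℝ (Fin d))
    (hx0 : ∀ ω, x 0 ω = x0)
    (hxrec : ∀ t : Fin (T + 1), ∀ ω,
      x ((t : ℕ) + 1) ω =
        if g (x t ω + δ t ω) < g (x t ω) then x t ω + δ t ω else x t ω)
    (hmean : ∀ t, ∫ ω, δ t ω ∂μ = 0)
    (hvar : ∀ t, ∫ ω, ‖δ t ω‖ ^ 2 ∂μ ≤ (γ / Real.sqrt T) ^ 2 * C)
    (hip : ∀ t, ∀ v : EuclideanSpace ℝ (Fin d),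
      ∫ ω, |⟪δ t ω, v⟫| ∂μ ≥ Ct * (γ / Real.sqrt T) * ‖v‖)
    (hint_g : ∀ t ≤ T + 1, Integrable (fun ω => g (x t ω)) μ)
    (hint_grad : ∀ t ≤ T, Integrable (fun ω => ‖gradient g (x t ω)‖) μ)
    (hint_δ : ∀ t, Integrable (fun ω => ‖δ t ω‖ ^ 2) μ) :
    (Finset.range (T + 1)).inf' (by simp)
        (fun t => ∫ ω, ‖gradient g (x t ω)‖ ∂μ) ≤
      2 / (γ * Ct * Real.sqrt T) *
        (g x0 - (∫ ω, g (x (T + 1) ω) ∂μ) + γ ^ 2 * C * L / 2) := by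
  set γs := γ / Real.sqrt T with hγs_def
  have hgm := hg.continuous.measurable
  have hstep : ∀ t < T, Ct * γs * ∫ ω, ‖gradient g (x t ω)‖ ∂μ ≤
      2 * ∫ ω, g (x t ω) ∂μ - 2 * ∫ ω, g (x (t + 1) ω) ∂μ + L * (γs ^ 2 * C) := by
    intro t ht
    set s : Fin (T + 1) := ⟨t, by omega⟩
    have hdescent := integral_image_acceptStep_le hL hg hlip
      (indepFun_iterate hindep hδmeas hgm hx0 hxrec s)
      (measurable_iterate hgm hδmeas hx0 hxrec s.is_le')
      (hδmeas s) (hmean s) (hip s) (hxrec s) (hint_g t (by omega)) (hint_g (t + 1) (by omega))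
      (hint_grad t (by omega)) (hint_δ s)
    linarith [mul_le_mul_of_nonneg_left (hvar s) hL]
  have hlast : ∫ ω, g (x (T + 1) ω) ∂μ ≤ ∫ ω, g (x T ω) ∂μ :=
    integral_mono (hint_g _ le_rfl) (hint_g T (by omega)) fun ω =>
      (congrArg g (hxrec ⟨T, by omega⟩ ω)).trans_le (image_acceptStep_le_self _ _)
  have hsum := mul_inf'_range_le_of_le_sub_add (b := fun t => 2 * ∫ ω, g (x t ω) ∂μ)
    (by positivity) hstep
  simp only [hx0, integral_const, probReal_univ, one_smul] at hsum
  have hγsT : Ct * γs * T = γ * Ct * Real.sqrt T := by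
    rw [hγs_def, mul_assoc, div_mul_eq_mul_div, mul_div_assoc, Real.div_sqrt]
    ring
  have hγs2T : T * (L * (γs ^ 2 * C)) = γ ^ 2 * C * L := by
    rw [hγs_def, div_pow, Real.sq_sqrt (Nat.cast_nonneg T)]
    field_simp
  rw [div_mul_eq_mul_div, le_div_iff₀ (by positivity), ← hγsT]
  linarith
end

section
/- Let g : ℝ^d → ℝ be differentiable with L-Lipschitz gradient (L-smooth). Then for every x, δ ∈ ℝ^d, min{ g(x), g(x + δ) } ≤ g(x) + (1/2)⟨∇g(x), δ⟩ + (L/2)‖δ‖₂² − (1/2)|⟨∇g(x), δ⟩|. -/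
open scoped RealInnerProductSpace

/-
The descent lemma `g (x + δ) ≤ g x + ⟪∇g x, δ⟫ + (L/2)‖δ‖²` comes from comparing
`t ↦ g (x + t • δ)` with its quadratic upper model on `[0, 1]`: the difference of their
derivatives is `⟪∇g (x + t • δ) - ∇g x, δ⟫ - L t ‖δ‖² ≤ 0` by Cauchy–Schwarz and the Lipschitz
bound. If `⟪∇g x, δ⟫ ≥ 0` the right-hand side is at least `g x`; otherwise it equals the
descent-lemma bound on `g (x + δ)`.
-/

section DescentLemma

variable {E : Type*} [NormedAddCommGroup E] [InnerProductSpace ℝ E] [CompleteSpace E]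
  {f : E → ℝ} {L : ℝ}

theorem HasGradientAt.hasDerivAt_comp_add_smul {f' x v : E} {t : ℝ}
    (hf : HasGradientAt f f' (x + t • v)) :
    HasDerivAt (fun s : ℝ => f (x + s • v)) ⟪f', v⟫ t := by
  have hline : HasDerivAt (fun s : ℝ => x + s • v) v t := by
    simpa using ((hasDerivAt_id t).smul_const v).const_add x
  exact (hasGradientAt_iff_hasFDerivAt.mp hf).comp_hasDerivAt t hline

theorem inner_gradient_add_smul_sub_le
    (hlip : ∀ x y, ‖gradient f x - gradient f y‖ ≤ L * ‖x - y‖) (x v : E) {t : ℝ} (ht : 0 ≤ t) :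
    ⟪gradient f (x + t • v) - gradient f x, v⟫ ≤ L * t * ‖v‖ ^ 2 :=
  calc ⟪gradient f (x + t • v) - gradient f x, v⟫
      ≤ ‖gradient f (x + t • v) - gradient f x‖ * ‖v‖ := real_inner_le_norm _ _
    _ ≤ L * ‖t • v‖ * ‖v‖ := by
        gcongr
        simpa using hlip (x + t • v) x
    _ = L * t * ‖v‖ ^ 2 := by rw [norm_smul, Real.norm_of_nonneg ht]; ring

theorem le_add_inner_gradient_add_sq_of_lipschitz_gradient (hf : Differentiable ℝ f)
    (hlip : ∀ x y, ‖gradient f x - gradient f y‖ ≤ L * ‖x - y‖) (x v : E) :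
    f (x + v) ≤ f x + ⟪gradient f x, v⟫ + (L / 2) * ‖v‖ ^ 2 := by
  set ψ : ℝ → ℝ := fun t => f (x + t • v) - t * ⟪gradient f x, v⟫ - L / 2 * t ^ 2 * ‖v‖ ^ 2
  have hψ : ∀ t, HasDerivAt ψ
      (⟪gradient f (x + t • v), v⟫ - ⟪gradient f x, v⟫ - L * t * ‖v‖ ^ 2) t := by
    intro t
    have hquad := ((hasDerivAt_pow 2 t).const_mul (L / 2)).mul_const (‖v‖ ^ 2)
    refine ((((hf (x + t • v)).hasGradientAt.hasDerivAt_comp_add_smul).sub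
      ((hasDerivAt_id t).mul_const ⟪gradient f x, v⟫)).sub hquad).congr_deriv ?_
    simp only [Nat.cast_ofNat, Nat.add_one_sub_one, pow_one]
    ring
  have hanti : AntitoneOn ψ (Set.Icc 0 1) := by
    refine antitoneOn_of_deriv_nonpos (convex_Icc 0 1)
      (fun t _ => (hψ t).continuousAt.continuousWithinAt)
      (fun t _ => (hψ t).differentiableAt.differentiableWithinAt) fun t ht => ?_
    rw [interior_Icc] at ht
    rw [(hψ t).deriv, ← inner_sub_left]
    linarith [inner_gradient_add_smul_sub_le hlip x v ht.1.le]
  have hψ_one_le := hanti (Set.left_mem_Icc.mpr zero_le_one)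
    (Set.right_mem_Icc.mpr zero_le_one) zero_le_one
  simp only [ψ, zero_smul, add_zero, one_smul] at hψ_one_le
  linarith

end DescentLemma

theorem min_le_add_half_sub_half_abs {a b p q : ℝ} (hq : 0 ≤ q) (hb : b ≤ a + p + q) :
    min a b ≤ a + (1 / 2) * p + q - (1 / 2) * |p| := by
  rcases le_or_gt 0 p with hp | hp
  · rw [abs_of_nonneg hp]
    linarith [min_le_left a b]
  · rw [abs_of_neg hp]
    linarith [min_le_right a b]

/-- The key one-step deterministic inequality in the proof of Proposition 2: for an `L`-smooth
function `g`, `min {g(x), g(x+δ)} ≤ g(x) + ½⟨∇g(x), δ⟩ + (L/2)‖δ‖² − ½|⟨∇g(x), δ⟩|`. -/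
theorem smooth_min_step_inequality
    (d : ℕ) (L : ℝ) (hL : 0 ≤ L)
    (g : EuclideanSpace ℝ (Fin d) → ℝ)
    (hg : Differentiable ℝ g)
    (hlip : ∀ x y : EuclideanSpace ℝ (Fin d),
      ‖gradient g x - gradient g y‖ ≤ L * ‖x - y‖)
    (x δ : EuclideanSpace ℝ (Fin d)) :
    min (g x) (g (x + δ)) ≤
      g x + (1 / 2) * ⟪gradient g x, δ⟫ + (L / 2) * ‖δ‖ ^ 2
        - (1 / 2) * |⟪gradient g x, δ⟫| :=
  min_le_add_half_sub_half_abs (by positivity)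
    (le_add_inner_gradient_add_sq_of_lipschitz_gradient hg hlip x δ)
end

section
/- Let g : ℝ^d → ℝ be differentiable with L-Lipschitz gradient (L-smooth), and let C > 0, C̃ > 0, γ_t > 0. On a probability space let x_t be a random vector in ℝ^d and δ_t a random vector independent of x_t satisfying E[δ_t] = 0, E[‖δ_t‖₂²] ≤ γ_t² C, and E[|⟨δ_t, v⟩|] ≥ C̃ γ_t ‖v‖₂ for every fixed v ∈ ℝ^d. Define x_{t+1} = x_t + δ_t if g(x_t + δ_t) < g(x_t) and x_{t+1} = x_t otherwise, and assume g(x_t), g(x_{t+1}), ‖∇g(x_t)‖₂ and ‖δ_t‖₂² are integrable. Then E[g(x_{t+1})] ≤ E[g(x_t)] − (C̃ γ_t / 2) · E[‖∇g(x_t)‖₂] + L C γ_t² / 2. -/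
open MeasureTheory ProbabilityTheory
open scoped RealInnerProductSpace

/-! The descent lemma gives `g (x + δ) ≤ g x + ⟪∇g x, δ⟫ + L/2 ‖δ‖²`, so the accepted iterate
satisfies `g x' = min (g x) (g (x + δ)) ≤ g x + min ⟪∇g x, δ⟫ 0 + L/2 ‖δ‖²`, and
`min t 0 = (t - |t|) / 2`. In expectation, independence and `E δ = 0` kill `E ⟪∇g x, δ⟫`, while
integrating first over `δ` (Fubini against the product of the laws) and using the hypothesis on
`E |⟪δ, v⟫|` at the fixed direction `v = ∇g x` gives `E |⟪∇g x, δ⟫| ≥ C̃ γ E ‖∇g x‖`. -/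

theorem min_le_add_half_sub_abs {a b t c : ℝ} (hb : b ≤ a + t + c) (hc : 0 ≤ c) :
    min a b ≤ a + (t - |t|) / 2 + c := by
  rcases le_or_gt 0 t with ht | ht
  · rw [abs_of_nonneg ht]; linarith [min_le_left a b]
  · rw [abs_of_neg ht]; linarith [min_le_right a b]

def acceptIfDecreases {α β : Type*} [Add α] [LinearOrder β] (g : α → β) (a v : α) : α :=
  if g (a + v) < g a then a + v else a

theorem apply_acceptIfDecreases {α β : Type*} [Add α] [LinearOrder β] (g : α → β) (a v : α) :
    g (acceptIfDecreases g a v) = min (g a) (g (a + v)) := by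
  unfold acceptIfDecreases
  split_ifs with h
  exacts [(min_eq_right h.le).symm, (min_eq_left (not_lt.1 h)).symm]

section Smooth

variable {E : Type*} [NormedAddCommGroup E] [InnerProductSpace ℝ E] [CompleteSpace E]
  {g : E → ℝ}

theorem hasDerivAt_apply_add_smul {a v : E} {t : ℝ} (hg : DifferentiableAt ℝ g (a + t • v)) :
    HasDerivAt (fun s : ℝ => g (a + s • v)) ⟪gradient g (a + t • v), v⟫ t := by
  have hline : HasDerivAt (fun s : ℝ => a + s • v) v t := by
    simpa using ((hasDerivAt_id t).smul_const v).const_add a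
  have := hg.hasGradientAt.hasFDerivAt.comp_hasDerivAt t hline
  simp only [InnerProductSpace.toDual_apply_apply] at this ⊢
  exact this

theorem le_add_inner_gradient_add_sq {L : ℝ} (hg : Differentiable ℝ g)
    (hlip : ∀ a b, ‖gradient g a - gradient g b‖ ≤ L * ‖a - b‖) (a v : E) :
    g (a + v) ≤ g a + ⟪gradient g a, v⟫ + L / 2 * ‖v‖ ^ 2 := by
  have hf (t : ℝ) : HasDerivAt (fun s : ℝ => g (a + s • v)) ⟪gradient g (a + t • v), v⟫ t :=
    hasDerivAt_apply_add_smul (hg _)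
  have hB (t : ℝ) : HasDerivAt (fun s : ℝ => g a + s * ⟪gradient g a, v⟫ + L / 2 * ‖v‖ ^ 2 * s ^ 2)
      (⟪gradient g a, v⟫ + L * ‖v‖ ^ 2 * t) t := by
    refine ((((hasDerivAt_id t).mul_const _).const_add (g a)).add
      ((hasDerivAt_pow 2 t).const_mul (L / 2 * ‖v‖ ^ 2))).congr_deriv ?_
    ring
  have hslope {t : ℝ} (ht : 0 ≤ t) :
      ⟪gradient g (a + t • v), v⟫ ≤ ⟪gradient g a, v⟫ + L * ‖v‖ ^ 2 * t := by
    have := calc ⟪gradient g (a + t • v) - gradient g a, v⟫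
        ≤ ‖gradient g (a + t • v) - gradient g a‖ * ‖v‖ := real_inner_le_norm _ _
      _ ≤ L * ‖a + t • v - a‖ * ‖v‖ := by gcongr; exact hlip _ _
      _ = L * ‖v‖ ^ 2 * t := by
        rw [add_sub_cancel_left, norm_smul, Real.norm_of_nonneg ht]; ring
    rw [inner_sub_left] at this
    linarith
  simpa using image_le_of_deriv_right_le_deriv_boundary
    (fun t _ => (hf t).continuousAt.continuousWithinAt) (fun t _ => (hf t).hasDerivWithinAt)
    (by simp) (fun t _ => (hB t).continuousAt.continuousWithinAt)
    (fun t _ => (hB t).hasDerivWithinAt) (fun t ht => hslope ht.1) (Set.right_mem_Icc.2 zero_le_one)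

theorem apply_acceptIfDecreases_le {L : ℝ} (hL : 0 ≤ L) (hg : Differentiable ℝ g)
    (hlip : ∀ a b, ‖gradient g a - gradient g b‖ ≤ L * ‖a - b‖) (a v : E) :
    g (acceptIfDecreases g a v) ≤
      g a + (⟪gradient g a, v⟫ - |⟪gradient g a, v⟫|) / 2 + L / 2 * ‖v‖ ^ 2 := by
  rw [apply_acceptIfDecreases g]
  exact min_le_add_half_sub_abs (le_add_inner_gradient_add_sq hg hlip a v)
    (mul_nonneg (div_nonneg hL zero_le_two) (sq_nonneg _))

end Smooth

theorem MeasureTheory.integral_le_add_half_sub_abs {Ω : Type*} [MeasurableSpace Ω]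
    {μ : Measure Ω} {f u t q : Ω → ℝ} (hf : Integrable f μ) (hu : Integrable u μ)
    (ht : Integrable t μ) (hq : Integrable q μ)
    (hle : ∀ ω, f ω ≤ u ω + (t ω - |t ω|) / 2 + q ω) :
    ∫ ω, f ω ∂μ ≤ ∫ ω, u ω ∂μ + (∫ ω, t ω ∂μ - ∫ ω, |t ω| ∂μ) / 2 + ∫ ω, q ω ∂μ := by
  have hmin : Integrable (fun ω => (t ω - |t ω|) / 2) μ := (ht.sub ht.abs).div_const 2
  calc ∫ ω, f ω ∂μ ≤ ∫ ω, u ω + (t ω - |t ω|) / 2 + q ω ∂μ :=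
        integral_mono hf ((hu.add hmin).add hq) hle
    _ = _ := by
        rw [integral_add _ hq, integral_add hu hmin, integral_div, integral_sub ht ht.abs]
        exact hu.add hmin

namespace ProbabilityTheory

variable {Ω α β F : Type*} [MeasurableSpace Ω] {μ : Measure Ω}
  [MeasurableSpace α] [MeasurableSpace β] [NormedAddCommGroup F] [NormedSpace ℝ F]

theorem IndepFun.integral_comp_eq_integral_integral [IsFiniteMeasure μ] {X : Ω → α} {Y : Ω → β}
    (hXY : IndepFun X Y μ) (hX : AEMeasurable X μ) (hY : AEMeasurable Y μ) {f : α × β → F}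
    (hf : Integrable f ((μ.map X).prod (μ.map Y))) :
    ∫ ω, f (X ω, Y ω) ∂μ = ∫ a, ∫ b, f (a, b) ∂(μ.map Y) ∂(μ.map X) := by
  have hmap := hXY.map_prod_eq_prod_map_map hX hY
  rw [← integral_map (hX.prodMk hY) (hmap ▸ hf.aestronglyMeasurable), hmap, integral_prod f hf]

variable {E : Type*} [NormedAddCommGroup E] [InnerProductSpace ℝ E] [MeasurableSpace E]
  [BorelSpace E] {U V : Ω → E}

theorem IndepFun.integral_inner [CompleteSpace E] (hUV : IndepFun U V μ) (hU : Integrable U μ)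
    (hV : Integrable V μ) : ∫ ω, ⟪U ω, V ω⟫ ∂μ = ⟪∫ ω, U ω ∂μ, ∫ ω, V ω ∂μ⟫ :=
  hUV.integral_bilin hU hV (innerSL ℝ)

theorem IndepFun.mul_integral_norm_le_integral_abs_inner_s3 [IsFiniteMeasure μ]
    [SecondCountableTopology E] (hUV : IndepFun U V μ) (hU : Integrable U μ)
    (hV : Integrable V μ) {c : ℝ} (hc : ∀ u, c * ‖u‖ ≤ ∫ ω, |⟪V ω, u⟫| ∂μ) :
    c * ∫ ω, ‖U ω‖ ∂μ ≤ ∫ ω, |⟪U ω, V ω⟫| ∂μ := by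
  have hUmap : Integrable id (μ.map U) :=
    (integrable_map_measure aestronglyMeasurable_id hU.aemeasurable).2 hU
  have hVmap : Integrable id (μ.map V) :=
    (integrable_map_measure aestronglyMeasurable_id hV.aemeasurable).2 hV
  have hf : Integrable (fun p : E × E => |⟪p.1, p.2⟫|) ((μ.map U).prod (μ.map V)) :=
    (hUmap.norm.mul_prod hVmap.norm).mono'
      continuous_inner.abs.aestronglyMeasurable (by simp [abs_real_inner_le_norm])
  rw [hUV.integral_comp_eq_integral_integral hU.aemeasurable hV.aemeasurable hf,
    ← integral_map hU.aemeasurable continuous_norm.aestronglyMeasurable, ← integral_const_mul]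
  refine integral_mono (hUmap.norm.const_mul c) hf.integral_prod_left fun u => ?_
  rw [integral_map hV.aemeasurable (continuous_const.inner continuous_id).abs.aestronglyMeasurable]
  simpa [real_inner_comm] using hc u

end ProbabilityTheory

theorem random_search_one_step_decrease_general
    (d : ℕ) (L C Ct γ : ℝ) (hL : 0 ≤ L)
    (g : EuclideanSpace ℝ (Fin d) → ℝ)
    (hg : Differentiable ℝ g)
    (hlip : ∀ a b : EuclideanSpace ℝ (Fin d),
      ‖gradient g a - gradient g b‖ ≤ L * ‖a - b‖)
    {Ω : Type*} [MeasurableSpace Ω] (μ : Measure Ω) [IsProbabilityMeasure μ]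
    (x δ : Ω → EuclideanSpace ℝ (Fin d))
    (hxmeas : Measurable x) (hδmeas : Measurable δ)
    (hindep : IndepFun x δ μ)
    (hmean : ∫ ω, δ ω ∂μ = 0)
    (hvar : ∫ ω, ‖δ ω‖ ^ 2 ∂μ ≤ γ ^ 2 * C)
    (hip : ∀ v : EuclideanSpace ℝ (Fin d),
      ∫ ω, |⟪δ ω, v⟫| ∂μ ≥ Ct * γ * ‖v‖)
    (x' : Ω → EuclideanSpace ℝ (Fin d))
    (hx' : ∀ ω, x' ω = if g (x ω + δ ω) < g (x ω) then x ω + δ ω else x ω)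
    (hint_gx : Integrable (fun ω => g (x ω)) μ)
    (hint_gx' : Integrable (fun ω => g (x' ω)) μ)
    (hint_grad : Integrable (fun ω => ‖gradient g (x ω)‖) μ)
    (hint_δ : Integrable (fun ω => ‖δ ω‖ ^ 2) μ) :
    ∫ ω, g (x' ω) ∂μ ≤
      ∫ ω, g (x ω) ∂μ - (Ct * γ / 2) * ∫ ω, ‖gradient g (x ω)‖ ∂μ
        + L * C * γ ^ 2 / 2 := by
  have hgrad : Continuous (gradient g) :=
    (LipschitzWith.of_dist_le' (by simpa only [dist_eq_norm] using hlip)).continuous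
  have hU : Integrable (fun ω => gradient g (x ω)) μ :=
    (integrable_norm_iff (hgrad.measurable.comp hxmeas).aestronglyMeasurable).1 hint_grad
  have hδ : Integrable δ μ :=
    ((memLp_two_iff_integrable_sq_norm hδmeas.aestronglyMeasurable).2 hint_δ).integrable one_le_two
  have hUδ : IndepFun (fun ω => gradient g (x ω)) δ μ := hindep.comp hgrad.measurable measurable_id
  have hT : Integrable (fun ω => ⟪gradient g (x ω), δ ω⟫) μ :=
    hUδ.integrable_bilin hU hδ (innerSL ℝ)
  have hT_mean : ∫ ω, ⟪gradient g (x ω), δ ω⟫ ∂μ = 0 := by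
    rw [hUδ.integral_inner hU hδ, hmean, inner_zero_right]
  have hT_abs := hUδ.mul_integral_norm_le_integral_abs_inner_s3 hU hδ fun v => hip v
  have hstep (ω : Ω) : g (x' ω) ≤
      g (x ω) + (⟪gradient g (x ω), δ ω⟫ - |⟪gradient g (x ω), δ ω⟫|) / 2 + L / 2 * ‖δ ω‖ ^ 2 := by
    rw [hx' ω]
    exact apply_acceptIfDecreases_le hL hg hlip (x ω) (δ ω)
  calc ∫ ω, g (x' ω) ∂μ
      ≤ ∫ ω, g (x ω) ∂μ
          + (∫ ω, ⟪gradient g (x ω), δ ω⟫ ∂μ - ∫ ω, |⟪gradient g (x ω), δ ω⟫| ∂μ) / 2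
          + ∫ ω, L / 2 * ‖δ ω‖ ^ 2 ∂μ :=
        integral_le_add_half_sub_abs hint_gx' hint_gx hT (hint_δ.const_mul _) hstep
    _ ≤ _ := by
        rw [hT_mean, integral_const_mul]
        linarith [mul_le_mul_of_nonneg_left hvar (div_nonneg hL zero_le_two)]

/-- The one-step expected decrease inequality from the proof of Proposition 2: for an `L`-smooth
`g`, a random iterate `x` and an independent random update `δ` with zero mean, second moment
bounded by `γ² C` and `E|⟨δ, v⟩| ≥ C̃ γ ‖v‖` for every fixed direction `v`, the accepted-only-if-
improving step `x' = x + δ` if `g(x+δ) < g(x)` else `x` satisfies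
`E[g(x')] ≤ E[g(x)] − (C̃ γ / 2) E‖∇g(x)‖ + L C γ² / 2`. -/
theorem random_search_one_step_decrease
    (d : ℕ) (L C Ct γ : ℝ) (hL : 0 ≤ L) (hC : 0 < C) (hCt : 0 < Ct) (hγ : 0 < γ)
    (g : EuclideanSpace ℝ (Fin d) → ℝ)
    (hg : Differentiable ℝ g)
    (hlip : ∀ a b : EuclideanSpace ℝ (Fin d),
      ‖gradient g a - gradient g b‖ ≤ L * ‖a - b‖)
    {Ω : Type*} [MeasurableSpace Ω] (μ : Measure Ω) [IsProbabilityMeasure μ]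
    (x δ : Ω → EuclideanSpace ℝ (Fin d))
    (hxmeas : Measurable x) (hδmeas : Measurable δ)
    (hindep : IndepFun x δ μ)
    (hmean : ∫ ω, δ ω ∂μ = 0)
    (hvar : ∫ ω, ‖δ ω‖ ^ 2 ∂μ ≤ γ ^ 2 * C)
    (hip : ∀ v : EuclideanSpace ℝ (Fin d),
      ∫ ω, |⟪δ ω, v⟫| ∂μ ≥ Ct * γ * ‖v‖)
    (x' : Ω → EuclideanSpace ℝ (Fin d))
    (hx' : ∀ ω, x' ω = if g (x ω + δ ω) < g (x ω) then x ω + δ ω else x ω)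
    (hint_gx : Integrable (fun ω => g (x ω)) μ)
    (hint_gx' : Integrable (fun ω => g (x' ω)) μ)
    (hint_grad : Integrable (fun ω => ‖gradient g (x ω)‖) μ)
    (hint_δ : Integrable (fun ω => ‖δ ω‖ ^ 2) μ) :
    ∫ ω, g (x' ω) ∂μ ≤
      ∫ ω, g (x ω) ∂μ - (Ct * γ / 2) * ∫ ω, ‖gradient g (x ω)‖ ∂μ
        + L * C * γ ^ 2 / 2 :=
  random_search_one_step_decrease_general d L C Ct γ hL g hg hlip μ x δ hxmeas hδmeas hindep hmean
    hvar hip x' hx' hint_gx hint_gx' hint_grad hint_δ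
end

section
/- Let s ≥ 2 and k ≥ s² be integers. For a finite set S ⊆ ℤ × ℤ, let N(S) denote the number of pairs (u, v) ∈ ℤ × ℤ such that the s × s lattice square {u, u+1, …, u+s−1} × {v, v+1, …, v+s−1} is contained in S. Then the maximum of N(S) over all finite sets S ⊆ ℤ × ℤ with |S| = k equals N* = (a − s + 1)(b − s + 1) + max(r − s + 1, 0), where a = ⌊√k⌋, b = ⌊k/a⌋, and r = k − a·b. -/
/-!
Let `P` be the set of lower-left corners of `s × s` squares inside `S`, so `P + [0, s)² ⊆ S`.
If `P` meets `w` columns and its tallest column has `h` cells, then `#P ≤ w h`, and comparing the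
level sets of the column-size functions of `P` and `S` with the one-dimensional Cauchy–Davenport
bound `#(A + [0, s)) ≥ #A + s - 1` gives `#P + (s - 1)(w + h + s - 1) ≤ #S`. Maximising `#P`
under these two constraints yields `N*`, because `a = ⌊√k⌋` forces `a ≤ b ≤ a + 2`; the
`a × b` rectangle with a row of `r` cells on top attains it.
-/

open Finset
open scoped Pointwise

lemma card_add_sub_one_le_of_forall_add_mem {A B : Finset ℤ} {s : ℕ} (hA : A.Nonempty)
    (hs : 0 < s) (hAB : ∀ a ∈ A, ∀ j < s, a + (j : ℤ) ∈ B) : #A + (s - 1) ≤ #B := by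
  set I : Finset ℤ := (range s).image (↑)
  have hI : #I = s := (card_image_of_injective _ Nat.cast_injective).trans (card_range s)
  have hIne : I.Nonempty := (nonempty_range_iff.2 hs.ne').image _
  calc #A + (s - 1) = #A + #I - 1 := by omega
    _ ≤ #(A + I) := cauchy_davenport_add_of_linearOrder_isCancelAdd hA hIne
    _ ≤ #B := card_le_card <| by
        intro x hx
        obtain ⟨a, ha, _, hjI, rfl⟩ := mem_add.1 hx
        obtain ⟨j, hj, rfl⟩ := mem_image.1 hjI
        exact hAB a ha j (mem_range.1 hj)

lemma sum_card_filter_lt_eq_sum_min {α : Type*} (X : Finset α) (c : α → ℕ) (n : ℕ) :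
    ∑ t ∈ range n, #{x ∈ X | t < c x} = ∑ x ∈ X, min (c x) n := by
  simp_rw [card_filter]
  rw [sum_comm]
  refine sum_congr rfl fun x _ => ?_
  rw [← card_filter, ← card_range (min (c x) n)]
  congr 1
  ext t
  simp only [mem_filter, mem_range]
  omega

/-- Count both sides by the levels `{x | t < c x}`: each nonempty level of `d`, shifted by
`[0, s)`, fits into the level of `c` that is `s - 1` higher, and each of the `s - 1` lowest levels
of `c` contains `U + [0, s)`. -/
lemma sum_add_mul_le_sum_of_add_le {U X : Finset ℤ} {c d : ℤ → ℕ} {s : ℕ} (hs : 0 < s)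
    (hU : U.Nonempty) (hd : ∀ u ∈ U, 0 < d u)
    (hcd : ∀ u ∈ U, ∀ i < s, u + (i : ℤ) ∈ X ∧ d u + (s - 1) ≤ c (u + i)) :
    ∑ u ∈ U, d u + (s - 1) * (#U + U.sup d + (s - 1)) ≤ ∑ x ∈ X, c x := by
  set m := s - 1
  set h := U.sup d
  have hlevel (t : ℕ) (ht : {u ∈ U | t < d u}.Nonempty) :
      #{u ∈ U | t < d u} + m ≤ #{x ∈ X | m + t < c x} :=
    card_add_sub_one_le_of_forall_add_mem ht hs fun u hu i hi => by
      rw [mem_filter] at hu ⊢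
      have := hcd u hu.1 i hi
      exact ⟨this.1, by omega⟩
  have hbottom (t : ℕ) (ht : t < m) : #U + m ≤ #{x ∈ X | t < c x} := by
    have h0 := hlevel 0 (by rwa [filter_true_of_mem hd])
    rw [filter_true_of_mem hd] at h0
    exact h0.trans (card_le_card (monotone_filter_right _ fun x hx => by omega))
  have htop (t : ℕ) (ht : t < h) : {u ∈ U | t < d u}.Nonempty := by
    obtain ⟨u, hu, hsup⟩ := exists_mem_eq_sup U hU d
    exact ⟨u, mem_filter.2 ⟨hu, hsup ▸ ht⟩⟩
  have hsum : ∑ u ∈ U, d u = ∑ t ∈ range h, #{u ∈ U | t < d u} := by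
    rw [sum_card_filter_lt_eq_sum_min]
    exact sum_congr rfl fun u hu => (min_eq_left (le_sup hu)).symm
  calc ∑ u ∈ U, d u + m * (#U + h + m)
      = ∑ _t ∈ range m, (#U + m) + ∑ t ∈ range h, (#{u ∈ U | t < d u} + m) := by
        simp only [hsum, sum_add_distrib, sum_const, card_range, smul_eq_mul]
        ring
    _ ≤ ∑ t ∈ range m, #{x ∈ X | t < c x} + ∑ t ∈ range h, #{x ∈ X | m + t < c x} :=
        add_le_add (sum_le_sum fun t ht => hbottom t (mem_range.1 ht))
          (sum_le_sum fun t ht => hlevel t (htop t (mem_range.1 ht)))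
    _ = ∑ x ∈ X, min (c x) (m + h) := by rw [← sum_range_add, sum_card_filter_lt_eq_sum_min]
    _ ≤ ∑ x ∈ X, c x := sum_le_sum fun _ _ => min_le_left _ _

def column (T : Finset (ℤ × ℤ)) (x : ℤ) : Finset ℤ := {p ∈ T | p.1 = x}.image Prod.snd

lemma mem_column {T : Finset (ℤ × ℤ)} {x y : ℤ} : y ∈ column T x ↔ (x, y) ∈ T := by
  simp [column]

lemma sum_card_column (T : Finset (ℤ × ℤ)) : ∑ x ∈ T.image Prod.fst, #(column T x) = #T := by
  rw [card_eq_sum_card_fiberwise fun p hp => mem_image_of_mem Prod.fst hp]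
  refine sum_congr rfl fun x _ => card_image_of_injOn fun p hp q hq hpq => ?_
  rw [mem_coe, mem_filter] at hp hq
  exact Prod.ext (hp.2.trans hq.2.symm) hpq

lemma exists_card_add_mul_le {P S : Finset (ℤ × ℤ)} {s : ℕ} (hs : 0 < s) (hP : P.Nonempty)
    (hPS : ∀ p ∈ P, ∀ i j : ℕ, i < s → j < s → (p.1 + i, p.2 + j) ∈ S) :
    ∃ w h, #P ≤ w * h ∧ #P + (s - 1) * (w + h + (s - 1)) ≤ #S := by
  refine ⟨#(P.image Prod.fst), (P.image Prod.fst).sup fun u => #(column P u), ?_, ?_⟩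
  · rw [← sum_card_column P]
    exact sum_le_card_nsmul _ _ _ fun u hu => le_sup (f := fun u => #(column P u)) hu
  · rw [← sum_card_column P, ← sum_card_column S]
    refine sum_add_mul_le_sum_of_add_le hs (hP.image _) ?_ ?_
    · intro u hu
      obtain ⟨p, hp, rfl⟩ := mem_image.1 hu
      exact card_pos.2 ⟨p.2, mem_column.2 hp⟩
    · intro u hu i hi
      obtain ⟨p, hp, rfl⟩ := mem_image.1 hu
      refine ⟨mem_image.2 ⟨_, hPS p hp i 0 hi hs, rfl⟩,
        card_add_sub_one_le_of_forall_add_mem ⟨p.2, mem_column.2 hp⟩ hs ?_⟩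
      intro v hv j hj
      rw [mem_column] at hv ⊢
      exact hPS _ hv i j hi hj

/-- With `a = u + (s - 1)` and `b = v + (s - 1)` the second constraint reads
`M + (s - 1)(A + B - u - v) ≤ u v + r`. Below `A + B = u + v`, AM–GM and `b ≤ a + 2` give
`A B ≤ u v`; at equality `A B ≤ u v` unless `b = a + 2`, which forces `r = 0`; above it,
`M + (s - 1) ≤ u v + r`. -/
lemma le_of_le_mul_of_add_mul_le {s a b r A B M : ℕ} (hs : 0 < s) (hsa : s ≤ a) (hab : a ≤ b)
    (hk : a * b + r < (a + 1) ^ 2) (hM : M ≤ A * B)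
    (hMk : M + (s - 1) * (A + B + (s - 1)) ≤ a * b + r) :
    M ≤ (a - s + 1) * (b - s + 1) + (r + 1 - s) := by
  obtain ⟨m, rfl⟩ : ∃ m, s = m + 1 := ⟨s - 1, by omega⟩
  obtain ⟨u, rfl⟩ : ∃ u, a = u + m := ⟨a - m, by omega⟩
  obtain ⟨v, rfl⟩ : ∃ v, b = v + m := ⟨b - m, by omega⟩
  have hu : 1 ≤ u := by omega
  have huv : u ≤ v := by omega
  rw [Nat.add_sub_cancel] at hMk
  rw [show u + m - (m + 1) + 1 = u by omega, show v + m - (m + 1) + 1 = v by omega,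
    show r + 1 - (m + 1) = r - m by omega]
  have hv : v ≤ u + 2 := by nlinarith
  have hAB : 4 * A * B ≤ (A + B) ^ 2 := four_mul_le_sq_add A B
  rcases lt_trichotomy (A + B) (u + v) with hlt | heq | hgt
  · have : M ≤ u * v := by nlinarith
    omega
  · have hMr : M ≤ u * v + r := by nlinarith
    rcases Nat.eq_zero_or_pos r with hr | hr
    · omega
    · have hv1 : v ≤ u + 1 := by nlinarith
      have : M ≤ u * v := by nlinarith
      omega
  · have : M + m ≤ u * v + r := by nlinarith
    omega

noncomputable def staircase (a b r : ℕ) : Finset (ℤ × ℤ) :=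
  Ico 0 (a : ℤ) ×ˢ Ico 0 (b : ℤ) ∪ Ico 0 (r : ℤ) ×ˢ {(b : ℤ)}

lemma mem_staircase {a b r : ℕ} {x y : ℤ} :
    (x, y) ∈ staircase a b r ↔ 0 ≤ x ∧ x < a ∧ 0 ≤ y ∧ y < b ∨ 0 ≤ x ∧ x < r ∧ y = b := by
  simp only [staircase, mem_union, mem_product, mem_Ico, mem_singleton, and_assoc]

lemma card_staircase (a b r : ℕ) : #(staircase a b r) = a * b + r := by
  rw [staircase, card_union_of_disjoint, card_product, card_product, Int.card_Ico, Int.card_Ico,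
    Int.card_Ico, card_singleton]
  · simp
  · rw [disjoint_left]
    rintro ⟨x, y⟩ h1 h2
    simp only [mem_product, mem_Ico, mem_singleton] at h1 h2
    omega

open Classical in
noncomputable def squareCorners (s : ℕ) (S : Finset (ℤ × ℤ)) : Finset (ℤ × ℤ) :=
  {p ∈ S | ∀ i j : ℕ, i < s → j < s → (p.1 + i, p.2 + j) ∈ S}

lemma mem_squareCorners {s : ℕ} {S : Finset (ℤ × ℤ)} {p : ℤ × ℤ} :
    p ∈ squareCorners s S ↔ p ∈ S ∧ ∀ i j : ℕ, i < s → j < s → (p.1 + i, p.2 + j) ∈ S := by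
  classical
  simp [squareCorners]

lemma coe_squareCorners {s : ℕ} (hs : 0 < s) (S : Finset (ℤ × ℤ)) :
    (squareCorners s S : Set (ℤ × ℤ)) =
      {p | ∀ i j : ℕ, i < s → j < s → (p.1 + (i : ℤ), p.2 + (j : ℤ)) ∈ S} := by
  ext p
  rw [mem_coe, mem_squareCorners, Set.mem_ofPred_eq]
  exact ⟨And.right, fun h => ⟨by simpa using h 0 0 hs hs, h⟩⟩

lemma squareCorners_staircase {s a b r : ℕ} (hs : 0 < s) (hsb : s ≤ b + 1) (hra : r ≤ a) :
    squareCorners s (staircase a b r) = staircase (a + 1 - s) (b + 1 - s) (r + 1 - s) := by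
  ext ⟨x, y⟩
  simp only [mem_squareCorners, mem_staircase]
  constructor
  · rintro ⟨h0, h⟩
    have := h (s - 1) (s - 1) (by omega) (by omega)
    omega
  · intro h
    exact ⟨by omega, fun i j hi hj => by omega⟩

/-- Proposition 3: among all finite subsets `S ⊆ ℤ × ℤ` of cardinality `k ≥ s²`, the maximal
number of axis-aligned `s × s` lattice squares contained in `S` is
`N* = (a − s + 1)(b − s + 1) + (r − s + 1)⁺` with `a = ⌊√k⌋`, `b = ⌊k/a⌋`, `r = k − a·b`. -/
theorem square_shape_maximizes_filter_count
    (s k : ℕ) (hs : 2 ≤ s) (hk : s ^ 2 ≤ k) :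
    IsGreatest
      {n : ℕ | ∃ S : Finset (ℤ × ℤ), S.card = k ∧
        n = Set.ncard {p : ℤ × ℤ |
          ∀ i j : ℕ, i < s → j < s → (p.1 + (i : ℤ), p.2 + (j : ℤ)) ∈ S}}
      ((Nat.sqrt k - s + 1) * (k / Nat.sqrt k - s + 1) +
        (k - Nat.sqrt k * (k / Nat.sqrt k) + 1 - s)) := by
  set a := Nat.sqrt k
  have hsa : s ≤ a := Nat.le_sqrt'.2 hk
  have hab : a ≤ k / a := (Nat.le_div_iff_mul_le (by omega)).2 (Nat.sqrt_le k)
  have hdiv : a * (k / a) + k % a = k := Nat.div_add_mod k a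
  have hka : k < (a + 1) ^ 2 := Nat.lt_succ_sqrt' k
  rw [show k - a * (k / a) = k % a by omega]
  constructor
  · refine ⟨staircase a (k / a) (k % a), by rw [card_staircase, hdiv], ?_⟩
    rw [← coe_squareCorners (by omega), Set.ncard_coe_finset,
      squareCorners_staircase (by omega) (by omega) (Nat.mod_lt k (by omega)).le, card_staircase,
      show a + 1 - s = a - s + 1 by omega, show k / a + 1 - s = k / a - s + 1 by omega]
  · rintro _ ⟨S, rfl, rfl⟩
    rw [← coe_squareCorners (by omega), Set.ncard_coe_finset]
    obtain hP | hP := (squareCorners s S).eq_empty_or_nonempty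
    · simp [hP]
    obtain ⟨w, h, hw, hwh⟩ :=
      exists_card_add_mul_le (by omega) hP fun p hp => (mem_squareCorners.1 hp).2
    exact le_of_le_mul_of_add_mul_le (by omega) hsa hab (by rwa [hdiv]) hw (by rwa [hdiv])
end

section
/- Let w, h, c be positive integers with h ≤ w and ε > 0. Index pixels by ZMod w × ZMod w (wraparound indexing). For a window position (r, s) ∈ ZMod w × ZMod w and signs σ ∈ {−1, 1}^{Fin h × Fin h × Fin c}, define δ^{(r,s,σ)} ∈ ℝ^{ZMod w × ZMod w × Fin c} by δ^{(r,s,σ)}_{r+k, s+l, i} = 2ε·σ_{k,l,i} for k, l ∈ Fin h and i ∈ Fin c, and δ^{(r,s,σ)} = 0 at all other coordinates. Then for every v ∈ ℝ^{ZMod w × ZMod w × Fin c}: (1 / (w² · 2^{c h²})) · Σ_{(r,s)} Σ_{σ} |⟨δ^{(r,s,σ)}, v⟩| ≥ (√2 · ε · h² / w²) · ‖v‖₂. -/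
/-!
Fix a window. Its inner product with `v` is the Rademacher sum `2ε ∑ₚ σₚ vₚ` over the `c h²`
coordinates of the window, so Khintchine's inequality with Szarek's sharp constant `1 / √2`
bounds its mean absolute value by `√2 ε √S` from below, where `S` is the energy of `v` on the
window. Khintchine's inequality comes from Fourier analysis on the cube: `f = |∑ aᵢ σᵢ|` is even,
so it has no Walsh weight in degree one, and the Poincaré inequality improves to
`2 Var f ≤ ∑ⱼ ‖Dⱼ f‖² ≤ ‖a‖²`, while `E f² = ‖a‖²`.

Averaging over windows: every pixel lies in exactly `h²` windows, so `∑ S = h² ‖v‖²`, and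
`S ≤ ‖v‖²` gives `√S ≥ S / ‖v‖`; hence `∑ √S ≥ h² ‖v‖`.
-/

open Finset

namespace BoolCube

variable {ι : Type*}

def toSign (b : Bool) : ℝ := if b then 1 else -1

@[simp] lemma toSign_true : toSign true = 1 := rfl

@[simp] lemma toSign_false : toSign false = -1 := rfl

lemma toSign_not (b : Bool) : toSign (!b) = -toSign b := by cases b <;> simp

lemma toSign_mul_self (b : Bool) : toSign b * toSign b = 1 := by cases b <;> simp

lemma abs_toSign (b : Bool) : |toSign b| = 1 := by cases b <;> simp

def walsh (A : Finset ι) (σ : ι → Bool) : ℝ := ∏ i ∈ A, toSign (σ i)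

variable [DecidableEq ι]

def flipAt (j : ι) (σ : ι → Bool) : ι → Bool := Function.update σ j (!σ j)

@[simp] lemma flipAt_apply_self (j : ι) (σ : ι → Bool) : flipAt j σ j = !σ j :=
  Function.update_self ..

lemma flipAt_apply_of_ne {i j : ι} (h : i ≠ j) (σ : ι → Bool) : flipAt j σ i = σ i :=
  Function.update_of_ne h ..

lemma flipAt_involutive (j : ι) : Function.Involutive (flipAt j) := by
  intro σ
  ext i
  rcases eq_or_ne i j with rfl | h
  · simp
  · simp [flipAt_apply_of_ne h]

lemma walsh_flipAt (A : Finset ι) (j : ι) (σ : ι → Bool) :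
    walsh A (flipAt j σ) = (if j ∈ A then -1 else 1) * walsh A σ := by
  have hrest : ∀ i ∈ A.erase j, toSign (flipAt j σ i) = toSign (σ i) := fun i hi => by
    rw [flipAt_apply_of_ne (ne_of_mem_erase hi)]
  split_ifs with hj
  · rw [walsh, walsh, ← mul_prod_erase A _ hj, ← mul_prod_erase A _ hj, prod_congr rfl hrest,
      flipAt_apply_self, toSign_not]
    ring
  · rw [one_mul, walsh, walsh, ← erase_eq_of_notMem hj, prod_congr rfl hrest]

noncomputable def flipDeriv (j : ι) (f : (ι → Bool) → ℝ) (σ : ι → Bool) : ℝ :=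
  (f σ - f (flipAt j σ)) / 2

variable [Fintype ι]

def fourierCoeff (f : (ι → Bool) → ℝ) (A : Finset ι) : ℝ := ∑ σ, f σ * walsh A σ

lemma sum_comp_flipAt {M : Type*} [AddCommMonoid M] (j : ι) (f : (ι → Bool) → M) :
    ∑ σ, f (flipAt j σ) = ∑ σ, f σ :=
  Fintype.sum_equiv (flipAt_involutive j).toPerm _ _ fun _ => rfl

lemma sum_walsh_eq_zero {A : Finset ι} (hA : A.Nonempty) : ∑ σ, walsh A σ = 0 := by
  obtain ⟨j, hj⟩ := hA
  have h := sum_comp_flipAt j (walsh A)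
  simp only [walsh_flipAt, if_pos hj, neg_one_mul, sum_neg_distrib] at h
  linarith

lemma sum_walsh_mul_walsh (σ τ : ι → Bool) :
    ∑ A : Finset ι, walsh A σ * walsh A τ = if σ = τ then 2 ^ Fintype.card ι else 0 := by
  have hprod : ∑ A : Finset ι, walsh A σ * walsh A τ =
      ∏ i, (toSign (σ i) * toSign (τ i) + 1) := by
    simp [prod_add, walsh, prod_mul_distrib]
  rw [hprod]
  split_ifs with h
  · subst h
    simp [toSign_mul_self, one_add_one_eq_two]
  · obtain ⟨j, hj⟩ := Function.ne_iff.mp h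
    refine prod_eq_zero (mem_univ j) ?_
    cases hσ : σ j <;> cases hτ : τ j <;> simp_all

lemma sum_fourierCoeff_sq (f : (ι → Bool) → ℝ) :
    ∑ A : Finset ι, fourierCoeff f A ^ 2 = 2 ^ Fintype.card ι * ∑ σ, f σ ^ 2 := by
  have hexpand : ∀ A, fourierCoeff f A ^ 2 = ∑ σ, ∑ τ, f σ * f τ * (walsh A σ * walsh A τ) :=
    fun A => by
      rw [fourierCoeff, sq, sum_mul_sum]
      exact sum_congr rfl fun _ _ => sum_congr rfl fun _ _ => by ring
  calc ∑ A : Finset ι, fourierCoeff f A ^ 2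
      = ∑ σ, ∑ τ, f σ * f τ * ∑ A : Finset ι, walsh A σ * walsh A τ := by
        simp_rw [hexpand, mul_sum]
        rw [sum_comm]
        exact sum_congr rfl fun σ _ => sum_comm
    _ = 2 ^ Fintype.card ι * ∑ σ, f σ ^ 2 := by
        simp [sum_walsh_mul_walsh, mul_sum, sq, mul_comm]

lemma fourierCoeff_flipDeriv (j : ι) (f : (ι → Bool) → ℝ) (A : Finset ι) :
    fourierCoeff (flipDeriv j f) A = if j ∈ A then fourierCoeff f A else 0 := by
  have hflip : ∑ σ, f (flipAt j σ) * walsh A σ = (if j ∈ A then -1 else 1) * fourierCoeff f A := by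
    rw [← sum_comp_flipAt j, fourierCoeff, mul_sum]
    refine sum_congr rfl fun σ _ => ?_
    rw [flipAt_involutive j σ, walsh_flipAt]
    ring
  have hsplit : fourierCoeff (flipDeriv j f) A =
      (fourierCoeff f A - ∑ σ, f (flipAt j σ) * walsh A σ) / 2 := by
    simp only [fourierCoeff, flipDeriv, ← sum_sub_distrib, sum_div]
    exact sum_congr rfl fun σ _ => by ring
  rw [hsplit, hflip]
  split_ifs <;> ring

lemma sum_fourierCoeff_sq_of_mem (j : ι) (f : (ι → Bool) → ℝ) :
    ∑ A with j ∈ A, fourierCoeff f A ^ 2 = 2 ^ Fintype.card ι * ∑ σ, flipDeriv j f σ ^ 2 := by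
  rw [← sum_fourierCoeff_sq, sum_filter]
  refine sum_congr rfl fun A _ => ?_
  rw [fourierCoeff_flipDeriv]
  split_ifs <;> simp

lemma sum_card_mul_fourierCoeff_sq (f : (ι → Bool) → ℝ) :
    ∑ A : Finset ι, #A * fourierCoeff f A ^ 2 =
      2 ^ Fintype.card ι * ∑ j, ∑ σ, flipDeriv j f σ ^ 2 := by
  calc ∑ A : Finset ι, #A * fourierCoeff f A ^ 2
      = ∑ A : Finset ι, ∑ j, if j ∈ A then fourierCoeff f A ^ 2 else 0 :=
        sum_congr rfl fun A _ => by rw [sum_ite_mem, univ_inter, sum_const, nsmul_eq_mul]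
    _ = ∑ j, ∑ A with j ∈ A, fourierCoeff f A ^ 2 := by
        rw [sum_comm]
        simp only [sum_filter]
    _ = 2 ^ Fintype.card ι * ∑ j, ∑ σ, flipDeriv j f σ ^ 2 := by
        simp only [sum_fourierCoeff_sq_of_mem, mul_sum]

lemma fourierCoeff_eq_zero_of_odd {f : (ι → Bool) → ℝ} (hf : ∀ σ, f (fun i => !σ i) = f σ)
    {A : Finset ι} (hA : Odd #A) : fourierCoeff f A = 0 := by
  have hwalsh : ∀ σ : ι → Bool, walsh A (fun i => !σ i) = -walsh A σ := fun σ => by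
    simp only [walsh, toSign_not, prod_neg, hA.neg_one_pow, neg_one_mul]
  have hneg : fourierCoeff f A = -fourierCoeff f A := by
    calc fourierCoeff f A = ∑ σ : ι → Bool, f (fun i => !σ i) * walsh A (fun i => !σ i) :=
          (Equiv.sum_comp (Function.Involutive.toPerm (fun σ : ι → Bool => fun i => !σ i)
            fun σ => by simp) (fun σ => f σ * walsh A σ)).symm
      _ = -fourierCoeff f A := by simp [hf, hwalsh, fourierCoeff]
  linarith

lemma poincare_of_even {f : (ι → Bool) → ℝ} (hf : ∀ σ, f (fun i => !σ i) = f σ) :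
    2 * (2 ^ Fintype.card ι * ∑ σ, f σ ^ 2 - (∑ σ, f σ) ^ 2) ≤
      2 ^ Fintype.card ι * ∑ j, ∑ σ, flipDeriv j f σ ^ 2 := by
  have hempty : fourierCoeff f ∅ = ∑ σ, f σ := by simp [fourierCoeff, walsh]
  have hterm : ∀ A : Finset ι,
      2 * fourierCoeff f A ^ 2 - (if A = ∅ then 2 * fourierCoeff f A ^ 2 else 0) ≤
        #A * fourierCoeff f A ^ 2 := by
    intro A
    rcases Nat.lt_or_ge #A 2 with hA | hA
    · interval_cases hc : #A
      · simp [card_eq_zero.mp hc]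
      · simp [fourierCoeff_eq_zero_of_odd hf (hc ▸ odd_one)]
    · have hA' : (2 : ℝ) ≤ #A := by exact_mod_cast hA
      rw [if_neg (by rintro rfl; simp at hA)]
      nlinarith [sq_nonneg (fourierCoeff f A)]
  have := sum_le_sum fun A (_ : A ∈ univ) => hterm A
  rw [sum_sub_distrib, sum_ite_eq', if_pos (mem_univ _), ← mul_sum, sum_fourierCoeff_sq,
    sum_card_mul_fourierCoeff_sq, hempty] at this
  linarith

lemma sum_toSign_mul_toSign (i j : ι) :
    ∑ σ : ι → Bool, toSign (σ i) * toSign (σ j) = if i = j then 2 ^ Fintype.card ι else 0 := by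
  split_ifs with h
  · subst h
    simp [toSign_mul_self]
  · simpa [walsh, prod_pair h] using sum_walsh_eq_zero (insert_nonempty i {j})

lemma sum_sq_sum_mul_toSign (a : ι → ℝ) :
    ∑ σ : ι → Bool, (∑ i, a i * toSign (σ i)) ^ 2 = 2 ^ Fintype.card ι * ∑ i, a i ^ 2 := by
  calc ∑ σ : ι → Bool, (∑ i, a i * toSign (σ i)) ^ 2
      = ∑ i, ∑ j, a i * a j * ∑ σ : ι → Bool, toSign (σ i) * toSign (σ j) := by
        simp_rw [sq, sum_mul_sum, mul_sum]
        rw [sum_comm]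
        refine sum_congr rfl fun i _ => ?_
        rw [sum_comm]
        exact sum_congr rfl fun j _ => sum_congr rfl fun σ _ => by ring
    _ = 2 ^ Fintype.card ι * ∑ i, a i ^ 2 := by
        simp [sum_toSign_mul_toSign, mul_sum, sq, mul_comm]

lemma sum_mul_toSign_sub_flipAt (a : ι → ℝ) (j : ι) (σ : ι → Bool) :
    ∑ i, a i * toSign (σ i) - ∑ i, a i * toSign (flipAt j σ i) = 2 * (a j * toSign (σ j)) := by
  rw [← sum_sub_distrib, sum_eq_single j]
  · rw [flipAt_apply_self, toSign_not]
    ring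
  · intro i _ hi
    rw [flipAt_apply_of_ne hi, sub_self]
  · simp

lemma abs_flipDeriv_abs_sum_le (a : ι → ℝ) (j : ι) (σ : ι → Bool) :
    |flipDeriv j (fun τ => |∑ i, a i * toSign (τ i)|) σ| ≤ |a j| := by
  have h := abs_abs_sub_abs_le_abs_sub (∑ i, a i * toSign (σ i))
    (∑ i, a i * toSign (flipAt j σ i))
  rw [sum_mul_toSign_sub_flipAt, abs_mul, abs_mul, abs_toSign, mul_one, abs_two] at h
  rw [flipDeriv, abs_div, abs_two]
  linarith

theorem khintchine (a : ι → ℝ) :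
    2 ^ Fintype.card ι * √(∑ i, a i ^ 2) ≤ √2 * ∑ σ : ι → Bool, |∑ i, a i * toSign (σ i)| := by
  set f : (ι → Bool) → ℝ := fun σ => |∑ i, a i * toSign (σ i)|
  have heven : ∀ σ, f (fun i => !σ i) = f σ := fun σ => by
    simp only [f, toSign_not, mul_neg, sum_neg_distrib, abs_neg]
  have hsq : ∑ σ, f σ ^ 2 = 2 ^ Fintype.card ι * ∑ i, a i ^ 2 := by
    simp only [f, sq_abs, sum_sq_sum_mul_toSign]
  have hderiv : ∑ j, ∑ σ, flipDeriv j f σ ^ 2 ≤ 2 ^ Fintype.card ι * ∑ i, a i ^ 2 := by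
    calc ∑ j, ∑ σ, flipDeriv j f σ ^ 2 ≤ ∑ j, ∑ _σ : ι → Bool, a j ^ 2 :=
          sum_le_sum fun j _ => sum_le_sum fun σ _ =>
            sq_le_sq.mpr (abs_flipDeriv_abs_sum_le a j σ)
      _ = 2 ^ Fintype.card ι * ∑ i, a i ^ 2 := by simp [mul_sum]
  have hpoincare := poincare_of_even heven
  have hN : (0 : ℝ) ≤ 2 ^ Fintype.card ι := by positivity
  rw [← pow_le_pow_iff_left₀ (by positivity) (by positivity) two_ne_zero, mul_pow, mul_pow,
    Real.sq_sqrt (by positivity), Real.sq_sqrt zero_le_two]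
  nlinarith [mul_le_mul_of_nonneg_left hderiv hN]

end BoolCube

lemma sum_div_sqrt_le_sum_sqrt {α : Type*} (s : Finset α) {S : α → ℝ} {V : ℝ}
    (h0 : ∀ a ∈ s, 0 ≤ S a) (hle : ∀ a ∈ s, S a ≤ V) :
    (∑ a ∈ s, S a) / √V ≤ ∑ a ∈ s, √(S a) := by
  rw [sum_div]
  refine sum_le_sum fun a ha => div_le_of_le_mul₀ (Real.sqrt_nonneg _) (Real.sqrt_nonneg _) ?_
  calc S a = √(S a) * √(S a) := (Real.mul_self_sqrt (h0 a ha)).symm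
    _ ≤ √(S a) * √V := by gcongr; exact hle a ha

def windowEmb (w h c : ℕ) (x : ZMod w × ZMod w) (p : Fin h × Fin h × Fin c) :
    ZMod w × ZMod w × Fin c :=
  (x.1 + ((p.1 : ℕ) : ZMod w), x.2 + ((p.2.1 : ℕ) : ZMod w), p.2.2)

section Window

variable {w h c : ℕ}

lemma natCast_fin_injective (hhw : h ≤ w) :
    Function.Injective fun k : Fin h => ((k : ℕ) : ZMod w) := fun k l hkl => by
  have := congrArg ZMod.val hkl
  simp only [ZMod.val_natCast_of_lt (k.2.trans_le hhw),
    ZMod.val_natCast_of_lt (l.2.trans_le hhw)] at this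
  exact Fin.ext this

lemma windowEmb_injective (hhw : h ≤ w) (x : ZMod w × ZMod w) :
    Function.Injective (windowEmb w h c x) := by
  rintro ⟨k, l, i⟩ ⟨k', l', i'⟩ he
  simp only [windowEmb, Prod.mk.injEq, add_right_inj] at he
  obtain ⟨hk, hl, rfl⟩ := he
  rw [natCast_fin_injective hhw hk, natCast_fin_injective hhw hl]

variable [NeZero w]

lemma sum_sum_windowEmb (f : ZMod w × ZMod w × Fin c → ℝ) :
    ∑ x, ∑ p, f (windowEmb w h c x p) = h ^ 2 * ∑ q, f q := by
  have htranslate : ∀ p : Fin h × Fin h × Fin c,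
      ∑ x, f (windowEmb w h c x p) = ∑ x : ZMod w × ZMod w, f (x.1, x.2, p.2.2) := fun p =>
    Fintype.sum_equiv (Equiv.addRight (((p.1 : ℕ) : ZMod w), ((p.2.1 : ℕ) : ZMod w))) _ _
      fun _ => rfl
  rw [sum_comm, sum_congr rfl fun p _ => htranslate p]
  simp [Fintype.sum_prod_type, sum_comm (γ := Fin c), mul_sum, sq, mul_assoc]

lemma sum_windowEmb_sq_le (hhw : h ≤ w) (x : ZMod w × ZMod w)
    (v : ZMod w × ZMod w × Fin c → ℝ) :
    ∑ p, v (windowEmb w h c x p) ^ 2 ≤ ∑ q, v q ^ 2 := by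
  classical
  rw [← sum_image (f := fun q => v q ^ 2) fun p _ p' _ hp => windowEmb_injective hhw x hp]
  exact sum_le_univ_sum_of_nonneg fun q => sq_nonneg _

open BoolCube in
lemma sum_mul_eq_sum_windowEmb (hhw : h ≤ w) {ε : ℝ} (x : ZMod w × ZMod w)
    (σ : Fin h × Fin h × Fin c → Bool) {δ : ZMod w × ZMod w × Fin c → ℝ}
    (hδ1 : ∀ (k l : Fin h) (i : Fin c),
      δ (x.1 + ((k : ℕ) : ZMod w), x.2 + ((l : ℕ) : ZMod w), i) =
        2 * ε * toSign (σ (k, l, i)))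
    (hδ0 : ∀ (a b : ZMod w) (i : Fin c),
      (∀ k l : Fin h, ¬(a = x.1 + ((k : ℕ) : ZMod w) ∧ b = x.2 + ((l : ℕ) : ZMod w))) →
        δ (a, b, i) = 0)
    (v : ZMod w × ZMod w × Fin c → ℝ) :
    ∑ q, δ q * v q = 2 * ε * ∑ p, v (windowEmb w h c x p) * toSign (σ p) := by
  rw [mul_sum]
  refine (Fintype.sum_of_injective _ (windowEmb_injective hhw x) _ _ ?_ fun p => ?_).symm
  · rintro ⟨a, b, i⟩ hq
    rw [hδ0 a b i fun k l hkl => hq ⟨(k, l, i), by simp [windowEmb, hkl.1, hkl.2]⟩, zero_mul]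
  · obtain ⟨k, l, i⟩ := p
    rw [windowEmb, hδ1]
    ring

open BoolCube in
lemma khintchine_window (hhw : h ≤ w) {ε : ℝ} (hε : 0 ≤ ε) (x : ZMod w × ZMod w)
    (δ : (Fin h × Fin h × Fin c → Bool) → ZMod w × ZMod w × Fin c → ℝ)
    (hδ1 : ∀ (σ : Fin h × Fin h × Fin c → Bool) (k l : Fin h) (i : Fin c),
      δ σ (x.1 + ((k : ℕ) : ZMod w), x.2 + ((l : ℕ) : ZMod w), i) =
        2 * ε * toSign (σ (k, l, i)))
    (hδ0 : ∀ (σ : Fin h × Fin h × Fin c → Bool) (a b : ZMod w) (i : Fin c),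
      (∀ k l : Fin h, ¬(a = x.1 + ((k : ℕ) : ZMod w) ∧ b = x.2 + ((l : ℕ) : ZMod w))) →
        δ σ (a, b, i) = 0)
    (v : ZMod w × ZMod w × Fin c → ℝ) :
    2 ^ (c * h ^ 2) * (√2 * ε * √(∑ p, v (windowEmb w h c x p) ^ 2)) ≤
      ∑ σ, |∑ q, δ σ q * v q| := by
  have hcard : Fintype.card (Fin h × Fin h × Fin c) = c * h ^ 2 := by
    simp only [Fintype.card_prod, Fintype.card_fin]
    ring
  have hk := khintchine fun p => v (windowEmb w h c x p)
  simp only [sum_mul_eq_sum_windowEmb hhw x _ (hδ1 _) (hδ0 _), abs_mul, abs_of_nonneg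
    (by positivity : (0 : ℝ) ≤ 2 * ε), ← mul_sum]
  rw [hcard] at hk
  have h2 : √2 * √2 = 2 := Real.mul_self_sqrt zero_le_two
  calc 2 ^ (c * h ^ 2) * (√2 * ε * √(∑ p, v (windowEmb w h c x p) ^ 2))
      = √2 * ε * (2 ^ (c * h ^ 2) * √(∑ p, v (windowEmb w h c x p) ^ 2)) := by ring
    _ ≤ √2 * ε * (√2 * ∑ σ : Fin h × Fin h × Fin c → Bool,
          |∑ p, v (windowEmb w h c x p) * toSign (σ p)|) := by gcongr
    _ = _ := by linear_combination (ε * ∑ σ : Fin h × Fin h × Fin c → Bool,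
          |∑ p, v (windowEmb w h c x p) * toSign (σ p)|) * h2

end Window

theorem pmultiple_inner_product_lower_bound_general
    (w h c : ℕ) [NeZero w] (hhw : h ≤ w)
    (ε : ℝ) (hε : 0 < ε)
    (δ : ZMod w → ZMod w → (Fin h × Fin h × Fin c → Bool) →
      ZMod w × ZMod w × Fin c → ℝ)
    (hδ1 : ∀ (r s : ZMod w) (σ : Fin h × Fin h × Fin c → Bool) (k l : Fin h) (i : Fin c),
      δ r s σ (r + ((k : ℕ) : ZMod w), s + ((l : ℕ) : ZMod w), i) =
        2 * ε * (if σ (k, l, i) then 1 else -1))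
    (hδ0 : ∀ (r s : ZMod w) (σ : Fin h × Fin h × Fin c → Bool) (a b : ZMod w) (i : Fin c),
      (∀ k l : Fin h, ¬(a = r + ((k : ℕ) : ZMod w) ∧ b = s + ((l : ℕ) : ZMod w))) →
        δ r s σ (a, b, i) = 0)
    (v : ZMod w × ZMod w × Fin c → ℝ) :
    (1 / ((w : ℝ) ^ 2 * 2 ^ (c * h ^ 2))) *
        ∑ r : ZMod w, ∑ s : ZMod w, ∑ σ : Fin h × Fin h × Fin c → Bool,
          |∑ q : ZMod w × ZMod w × Fin c, δ r s σ q * v q| ≥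
      Real.sqrt 2 * ε * (h : ℝ) ^ 2 / (w : ℝ) ^ 2 *
        Real.sqrt (∑ q : ZMod w × ZMod w × Fin c, (v q) ^ 2) := by
  set V := ∑ q, v q ^ 2
  set S : ZMod w × ZMod w → ℝ := fun x => ∑ p, v (windowEmb w h c x p) ^ 2
  have hwindow : ∀ x, 2 ^ (c * h ^ 2) * (√2 * ε * √(S x)) ≤
      ∑ σ, |∑ q, δ x.1 x.2 σ q * v q| := fun x =>
    khintchine_window hhw hε.le x (δ x.1 x.2) (hδ1 x.1 x.2) (hδ0 x.1 x.2) v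
  have hjensen : (h : ℝ) ^ 2 * √V ≤ ∑ x, √(S x) :=
    calc (h : ℝ) ^ 2 * √V = (∑ x, S x) / √V := by
          rw [show ∑ x, S x = h ^ 2 * V from sum_sum_windowEmb fun q => v q ^ 2, mul_div_assoc,
            Real.div_sqrt]
      _ ≤ ∑ x, √(S x) :=
          sum_div_sqrt_le_sum_sqrt _ (fun x _ => sum_nonneg fun p _ => sq_nonneg _)
            fun x _ => sum_windowEmb_sq_le hhw x v
  have hw : (0 : ℝ) < w := by exact_mod_cast Nat.pos_of_neZero w
  rw [ge_iff_le, ← Fintype.sum_prod_type']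
  calc √2 * ε * (h : ℝ) ^ 2 / (w : ℝ) ^ 2 * √V
      = 1 / ((w : ℝ) ^ 2 * 2 ^ (c * h ^ 2)) * (2 ^ (c * h ^ 2) * (√2 * ε * (h ^ 2 * √V))) := by
        field_simp
    _ ≤ 1 / ((w : ℝ) ^ 2 * 2 ^ (c * h ^ 2)) * ∑ x, 2 ^ (c * h ^ 2) * (√2 * ε * √(S x)) := by
        rw [← mul_sum, ← mul_sum]
        gcongr
    _ ≤ _ := by gcongr with x; exact hwindow x

/-- Supplement A.4, inner-product lower bound for the sampling distribution `P^multiple`: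
averaging over all window positions `(r, s)` (wraparound indexing in `ZMod w`) and all
`±1`-sign patterns `σ` on the `h × h × c` window, the expected absolute inner product of the
update `δ^{(r,s,σ)}` (value `2ε·σ` on the window, `0` elsewhere) with any direction `v`
satisfies `E|⟨δ, v⟩| ≥ √2 ε h² / w² · ‖v‖₂`. -/
theorem pmultiple_inner_product_lower_bound
    (w h c : ℕ) [NeZero w] (hh : 0 < h) (hc : 0 < c) (hhw : h ≤ w)
    (ε : ℝ) (hε : 0 < ε)
    (δ : ZMod w → ZMod w → (Fin h × Fin h × Fin c → Bool) →
      ZMod w × ZMod w × Fin c → ℝ)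
    (hδ1 : ∀ (r s : ZMod w) (σ : Fin h × Fin h × Fin c → Bool) (k l : Fin h) (i : Fin c),
      δ r s σ (r + ((k : ℕ) : ZMod w), s + ((l : ℕ) : ZMod w), i) =
        2 * ε * (if σ (k, l, i) then 1 else -1))
    (hδ0 : ∀ (r s : ZMod w) (σ : Fin h × Fin h × Fin c → Bool) (a b : ZMod w) (i : Fin c),
      (∀ k l : Fin h, ¬(a = r + ((k : ℕ) : ZMod w) ∧ b = s + ((l : ℕ) : ZMod w))) →
        δ r s σ (a, b, i) = 0)
    (v : ZMod w × ZMod w × Fin c → ℝ) :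
    (1 / ((w : ℝ) ^ 2 * 2 ^ (c * h ^ 2))) *
        ∑ r : ZMod w, ∑ s : ZMod w, ∑ σ : Fin h × Fin h × Fin c → Bool,
          |∑ q : ZMod w × ZMod w × Fin c, δ r s σ q * v q| ≥
      Real.sqrt 2 * ε * (h : ℝ) ^ 2 / (w : ℝ) ^ 2 *
        Real.sqrt (∑ q : ZMod w × ZMod w × Fin c, (v q) ^ 2) :=
  pmultiple_inner_product_lower_bound_general w h c hhw ε hε δ hδ1 hδ0 v
end

section
/- For every n ≥ 1 and every a ∈ ℝ^n, the average of |Σ_{i=1}^n σ_i a_i| over all sign vectors σ ∈ {−1, 1}^n satisfies (1/2^n) · Σ_{σ ∈ {−1,1}^n} |Σ_{i=1}^n σ_i a_i| ≥ (1/√2) · (Σ_{i=1}^n a_i²)^{1/2}. -/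
/-!
Write `f σ = |∑ σᵢ aᵢ|` on the cube `{±1}ⁿ` (Latała–Oleszkiewicz). Since `f` is even, its Walsh
expansion has no weight on odd levels, in particular none on level one, so the variance of `f`
is at most half its total influence `∑ᵢ 𝔼 ((f σ - f (σ with σᵢ flipped)) / 2)²`. Flipping `σᵢ`
moves `f` by at most `2 |aᵢ|`, so the total influence is at most `∑ aᵢ² = 𝔼 f²`. Hence
`𝔼 f² - (𝔼 f)² ≤ 𝔼 f² / 2`, that is `(𝔼 f)² ≥ ∑ aᵢ² / 2`.
-/

open Finset

namespace Khintchine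

def signOf (b : Bool) : ℝ := if b then 1 else -1

lemma signOf_not (b : Bool) : signOf (!b) = -signOf b := by
  cases b <;> simp [signOf]

lemma signOf_mul_self (b : Bool) : signOf b * signOf b = 1 := by
  cases b <;> simp [signOf]

lemma one_add_signOf_mul_signOf (b c : Bool) :
    1 + signOf b * signOf c = if b = c then 2 else 0 := by
  cases b <;> cases c <;> norm_num [signOf]

variable {ι : Type*}

def walsh (s : Finset ι) (σ : ι → Bool) : ℝ := ∏ i ∈ s, signOf (σ i)

lemma walsh_not (s : Finset ι) (σ : ι → Bool) :
    walsh s (fun j => !σ j) = (-1) ^ #s * walsh s σ := by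
  simp [walsh, signOf_not, prod_neg]

section

variable [Fintype ι]

lemma sum_walsh_mul_walsh (σ τ : ι → Bool) :
    ∑ s, walsh s σ * walsh s τ = if σ = τ then 2 ^ Fintype.card ι else 0 := by
  simp_rw [walsh, ← prod_mul_distrib, ← powerset_univ, ← prod_one_add,
    one_add_signOf_mul_signOf]
  split_ifs with h
  · simp [h]
  · obtain ⟨i, hi⟩ := Function.ne_iff.mp h
    exact prod_eq_zero (mem_univ i) (if_neg hi)

def rademacherSum (a : ι → ℝ) (σ : ι → Bool) : ℝ := ∑ i, signOf (σ i) * a i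

lemma rademacherSum_not (a : ι → ℝ) (σ : ι → Bool) :
    rademacherSum a (fun j => !σ j) = -rademacherSum a σ := by
  simp [rademacherSum, signOf_not]

end

variable [DecidableEq ι]

def flipAt (i : ι) (σ : ι → Bool) : ι → Bool := Function.update σ i (!σ i)

lemma flipAt_involutive (i : ι) : Function.Involutive (flipAt i) := by
  intro σ
  ext j
  rcases eq_or_ne j i with rfl | hj <;> simp [flipAt, *]

lemma signOf_flipAt (i j : ι) (σ : ι → Bool) :
    signOf (flipAt i σ j) = (if j = i then -1 else 1) * signOf (σ j) := by
  rcases eq_or_ne j i with rfl | hj <;> simp [flipAt, signOf_not, *]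

lemma walsh_flipAt (s : Finset ι) (i : ι) (σ : ι → Bool) :
    walsh s (flipAt i σ) = (if i ∈ s then -1 else 1) * walsh s σ := by
  rw [walsh, walsh, ← prod_ite_eq' s i (fun _ => (-1 : ℝ)), ← prod_mul_distrib]
  simp only [signOf_flipAt]

variable [Fintype ι]

/-- Unnormalised: `walshCoeff f s` is `2 ^ card ι` times the Fourier coefficient `f̂(s)`. -/
def walshCoeff (f : (ι → Bool) → ℝ) (s : Finset ι) : ℝ := ∑ σ, f σ * walsh s σ

lemma walshCoeff_empty (f : (ι → Bool) → ℝ) : walshCoeff f ∅ = ∑ σ, f σ := by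
  simp [walshCoeff, walsh]

lemma sum_walshCoeff_sq (f : (ι → Bool) → ℝ) :
    ∑ s, walshCoeff f s ^ 2 = 2 ^ Fintype.card ι * ∑ σ, f σ ^ 2 := by
  calc ∑ s, walshCoeff f s ^ 2
      = ∑ σ, ∑ τ, f σ * f τ * ∑ s, walsh s σ * walsh s τ := by
        simp_rw [walshCoeff, sq, sum_mul_sum, mul_sum]
        rw [sum_comm]
        refine sum_congr rfl fun σ _ => ?_
        rw [sum_comm]
        exact sum_congr rfl fun τ _ => sum_congr rfl fun s _ => by ring
    _ = 2 ^ Fintype.card ι * ∑ σ, f σ ^ 2 := by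
        simp_rw [sum_walsh_mul_walsh, mul_ite, mul_zero, sum_ite_eq, mem_univ, if_true,
          mul_sum]
        exact sum_congr rfl fun σ _ => by ring

lemma walshCoeff_eq_zero_of_odd {f : (ι → Bool) → ℝ} (hf : ∀ σ, f (fun j => !σ j) = f σ)
    {s : Finset ι} (hs : Odd #s) : walshCoeff f s = 0 := by
  have : walshCoeff f s = -walshCoeff f s := by
    simp only [walshCoeff]
    rw [← sum_neg_distrib]
    refine Fintype.sum_bijective _ (Function.Involutive.bijective (f := fun σ j => !σ j)
      fun σ => by simp) _ _ fun σ => ?_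
    rw [hf, walsh_not, hs.neg_one_pow]
    ring
  linarith

lemma two_mul_walshCoeff_sq_le {f : (ι → Bool) → ℝ} (hf : ∀ σ, f (fun j => !σ j) = f σ)
    {s : Finset ι} (hs : s ≠ ∅) : 2 * walshCoeff f s ^ 2 ≤ #s * walshCoeff f s ^ 2 := by
  rcases Nat.even_or_odd #s with heven | hodd
  · have : 2 ≤ #s := by
      obtain ⟨k, hk⟩ := heven
      have := card_pos.mpr (nonempty_iff_ne_empty.mpr hs)
      omega
    gcongr
    exact_mod_cast this
  · simp [walshCoeff_eq_zero_of_odd hf hodd]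

lemma two_mul_sum_walshCoeff_sq_le {f : (ι → Bool) → ℝ} (hf : ∀ σ, f (fun j => !σ j) = f σ) :
    2 * ∑ s, walshCoeff f s ^ 2 ≤
      2 * walshCoeff f ∅ ^ 2 + ∑ s, (#s : ℝ) * walshCoeff f s ^ 2 := by
  rw [← add_sum_erase _ _ (mem_univ ∅), ← add_sum_erase _ _ (mem_univ ∅), mul_add, mul_sum]
  simp only [card_empty, Nat.cast_zero, zero_mul, zero_add]
  exact add_le_add le_rfl
    (sum_le_sum fun s hs => two_mul_walshCoeff_sq_le hf (ne_of_mem_erase hs))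

lemma sum_comp_flipAt (g : (ι → Bool) → ℝ) (i : ι) : ∑ σ, g (flipAt i σ) = ∑ σ, g σ :=
  Fintype.sum_bijective _ (flipAt_involutive i).bijective _ _ fun _ => rfl

lemma walshCoeff_comp_flipAt (f : (ι → Bool) → ℝ) (i : ι) (s : Finset ι) :
    walshCoeff (fun σ => f (flipAt i σ)) s = (if i ∈ s then -1 else 1) * walshCoeff f s := by
  have := sum_comp_flipAt (fun σ => f σ * walsh s (flipAt i σ)) i
  simp only [flipAt_involutive i _, walsh_flipAt] at this
  rw [walshCoeff, walshCoeff, mul_sum, this]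
  exact sum_congr rfl fun σ _ => by ring

lemma walshCoeff_sub_comp_flipAt (f : (ι → Bool) → ℝ) (i : ι) (s : Finset ι) :
    walshCoeff (fun σ => f σ - f (flipAt i σ)) s = if i ∈ s then 2 * walshCoeff f s else 0 := by
  have := walshCoeff_comp_flipAt f i s
  simp only [walshCoeff, sub_mul, sum_sub_distrib] at this ⊢
  rw [this]
  split_ifs <;> ring

lemma four_mul_sum_card_mul_walshCoeff_sq (f : (ι → Bool) → ℝ) :
    4 * ∑ s, (#s : ℝ) * walshCoeff f s ^ 2 =
      2 ^ Fintype.card ι * ∑ i, ∑ σ, (f σ - f (flipAt i σ)) ^ 2 := by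
  calc 4 * ∑ s, (#s : ℝ) * walshCoeff f s ^ 2
      = ∑ i, ∑ s, (if i ∈ s then 2 * walshCoeff f s else 0) ^ 2 := by
        rw [sum_comm, mul_sum]
        refine sum_congr rfl fun s _ => ?_
        simp only [ite_pow, mul_pow, zero_pow two_ne_zero, sum_ite_mem, univ_inter, sum_const,
          nsmul_eq_mul]
        ring
    _ = 2 ^ Fintype.card ι * ∑ i, ∑ σ, (f σ - f (flipAt i σ)) ^ 2 := by
        rw [mul_sum]
        refine sum_congr rfl fun i _ => ?_
        rw [← sum_walshCoeff_sq]
        simp_rw [walshCoeff_sub_comp_flipAt]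

lemma rademacherSum_sub_flipAt (a : ι → ℝ) (i : ι) (σ : ι → Bool) :
    rademacherSum a σ - rademacherSum a (flipAt i σ) = 2 * signOf (σ i) * a i := by
  simp only [rademacherSum, signOf_flipAt, ← sum_sub_distrib]
  rw [sum_eq_single i (fun j _ hj => by simp [hj]) (by simp)]
  rw [if_pos rfl]
  ring

lemma sq_abs_rademacherSum_sub_flipAt_le (a : ι → ℝ) (i : ι) (σ : ι → Bool) :
    (|rademacherSum a σ| - |rademacherSum a (flipAt i σ)|) ^ 2 ≤ 4 * a i ^ 2 := by
  calc (|rademacherSum a σ| - |rademacherSum a (flipAt i σ)|) ^ 2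
      ≤ (rademacherSum a σ - rademacherSum a (flipAt i σ)) ^ 2 :=
        sq_le_sq.mpr (abs_abs_sub_abs_le_abs_sub _ _)
    _ = 4 * a i ^ 2 := by
        rw [rademacherSum_sub_flipAt, mul_pow, mul_pow, sq (signOf _), signOf_mul_self]; ring

lemma sum_signOf_mul_signOf (i j : ι) :
    ∑ σ : ι → Bool, signOf (σ i) * signOf (σ j) = if i = j then 2 ^ Fintype.card ι else 0 := by
  split_ifs with h
  · simp [h, signOf_mul_self]
  · have := sum_comp_flipAt (fun σ => signOf (σ i) * signOf (σ j)) i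
    simp only [signOf_flipAt, if_true, if_neg (Ne.symm h), one_mul, neg_mul,
      sum_neg_distrib] at this
    linarith

lemma sum_rademacherSum_sq (a : ι → ℝ) :
    ∑ σ, rademacherSum a σ ^ 2 = 2 ^ Fintype.card ι * ∑ i, a i ^ 2 := by
  calc ∑ σ, rademacherSum a σ ^ 2
      = ∑ i, ∑ j, a i * a j * ∑ σ : ι → Bool, signOf (σ i) * signOf (σ j) := by
        simp_rw [rademacherSum, sq, sum_mul_sum, mul_sum]
        rw [sum_comm]
        refine sum_congr rfl fun i _ => ?_
        rw [sum_comm]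
        exact sum_congr rfl fun j _ => sum_congr rfl fun σ _ => by ring
    _ = 2 ^ Fintype.card ι * ∑ i, a i ^ 2 := by
        simp_rw [sum_signOf_mul_signOf, mul_ite, mul_zero, sum_ite_eq, mem_univ, if_true, mul_sum]
        exact sum_congr rfl fun i _ => by ring

lemma sq_two_pow_mul_sum_sq_le (a : ι → ℝ) :
    (2 ^ Fintype.card ι) ^ 2 * ∑ i, a i ^ 2 ≤ 2 * (∑ σ, |rademacherSum a σ|) ^ 2 := by
  set f := fun σ => |rademacherSum a σ|
  have heven : ∀ σ, f (fun j => !σ j) = f σ := fun σ => by simp [f, rademacherSum_not]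
  have hparseval : ∑ s, walshCoeff f s ^ 2 = (2 ^ Fintype.card ι) ^ 2 * ∑ i, a i ^ 2 := by
    simp only [sum_walshCoeff_sq, f, sq_abs, sum_rademacherSum_sq]
    ring
  have hinfluence : 4 * ∑ s, (#s : ℝ) * walshCoeff f s ^ 2 ≤
      4 * ((2 ^ Fintype.card ι) ^ 2 * ∑ i, a i ^ 2) := by
    calc 4 * ∑ s, (#s : ℝ) * walshCoeff f s ^ 2
        = 2 ^ Fintype.card ι * ∑ i, ∑ σ, (f σ - f (flipAt i σ)) ^ 2 :=
          four_mul_sum_card_mul_walshCoeff_sq f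
      _ ≤ 2 ^ Fintype.card ι * ∑ i, ∑ _σ : ι → Bool, 4 * a i ^ 2 := by
          gcongr with i _ σ _
          exact sq_abs_rademacherSum_sub_flipAt_le a i σ
      _ = 4 * ((2 ^ Fintype.card ι) ^ 2 * ∑ i, a i ^ 2) := by
          simp only [sum_const, card_univ, Fintype.card_fun, Fintype.card_bool, nsmul_eq_mul,
            mul_sum]
          push_cast
          exact sum_congr rfl fun i _ => by ring
  have hpoincare := two_mul_sum_walshCoeff_sq_le heven
  rw [walshCoeff_empty] at hpoincare
  linarith

end Khintchine

theorem khintchine_lower_bound_general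
    (n : ℕ) (a : Fin n → ℝ) :
    (1 / 2 ^ n) * ∑ σ : Fin n → Bool, |∑ i, (if σ i then (1 : ℝ) else -1) * a i| ≥
      (1 / Real.sqrt 2) * Real.sqrt (∑ i, (a i) ^ 2) := by
  set X := ∑ σ : Fin n → Bool, |∑ i, (if σ i then (1 : ℝ) else -1) * a i|
  have hX : 0 ≤ X := sum_nonneg fun σ _ => abs_nonneg _
  have key : ((2 : ℝ) ^ n) ^ 2 * ∑ i, a i ^ 2 ≤ 2 * X ^ 2 := by
    have := Khintchine.sq_two_pow_mul_sum_sq_le a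
    rwa [Fintype.card_fin] at this
  rw [ge_iff_le, one_div_mul_eq_div, ← Real.sqrt_div' _ (by norm_num : (0:ℝ) ≤ 2),
    one_div_mul_eq_div, ← Real.sqrt_sq (div_nonneg hX (by positivity))]
  gcongr
  rw [div_pow, div_le_div_iff₀ (by norm_num) (by positivity)]
  linarith

/-- Khintchine inequality (first-moment lower bound with the optimal constant `1/√2`):
the average of `|Σ σ_i a_i|` over all sign vectors `σ ∈ {−1,1}^n` is at least
`(1/√2) · ‖a‖₂`. -/
theorem khintchine_lower_bound
    (n : ℕ) (hn : 1 ≤ n) (a : Fin n → ℝ) :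
    (1 / 2 ^ n) * ∑ σ : Fin n → Bool, |∑ i, (if σ i then (1 : ℝ) else -1) * a i| ≥
      (1 / Real.sqrt 2) * Real.sqrt (∑ i, (a i) ^ 2) :=
  khintchine_lower_bound_general n a
end

section
/- Let h ≥ 1 and w = m·h for an integer m ≥ 1, and let ε > 0. Partition {1, …, w} × {1, …, w} into the m² blocks B_{(r,s)} = {rh+1, …, (r+1)h} × {sh+1, …, (s+1)h} for r, s ∈ {0, …, m−1}. For a block (r,s) and signs σ ∈ {−1, 1}^{B_{(r,s)}}, let δ^{(r,s,σ)} ∈ ℝ^{w × w} equal 2ε·σ_{k,l} at each (k,l) ∈ B_{(r,s)} and 0 elsewhere. Then for every v ∈ ℝ^{w × w}, the expectation of |⟨δ, v⟩| under the uniform distribution over (r, s) and over σ ∈ {−1,1}^{h×h} satisfies E|⟨δ, v⟩| ≤ 2ε · (h/w) · ‖v‖₂. -/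
/-!
On a block `B`, `⟨δ, v⟩ = 2ε ∑_{p ∈ B} v_p σ_p` is a Rademacher sum. Distinct signs are
orthogonal, so its second moment is `4ε² ‖v|_B‖₂²`, and Cauchy–Schwarz bounds the mean of its
absolute value by `2ε ‖v|_B‖₂`. Averaging over the `m²` blocks and applying Cauchy–Schwarz once
more, `m⁻² ∑_B ‖v|_B‖₂ ≤ m⁻¹ (∑_B ‖v|_B‖₂²)^{1/2} = (h / w) ‖v‖₂`.
-/

open Finset

theorem sum_abs_le_sqrt_card_mul_sum_sq {ι : Type*} (s : Finset ι) (f : ι → ℝ) :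
    ∑ i ∈ s, |f i| ≤ √(#s * ∑ i ∈ s, f i ^ 2) :=
  Real.le_sqrt_of_sq_le <| by simpa using sq_sum_le_card_mul_sum_sq (s := s) (f := fun i => |f i|)

section Rademacher

def boolSign (b : Bool) : ℝ := if b then 1 else -1

@[simp] theorem boolSign_not (b : Bool) : boolSign (!b) = -boolSign b := by
  cases b <;> simp [boolSign]

@[simp] theorem boolSign_mul_self (b : Bool) : boolSign b * boolSign b = 1 := by
  cases b <;> simp [boolSign]

variable {ι : Type*} [Fintype ι] [DecidableEq ι]

theorem sum_boolSign_mul_boolSign_of_ne {i j : ι} (hij : i ≠ j) :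
    ∑ σ : ι → Bool, boolSign (σ i) * boolSign (σ j) = 0 := by
  -- flipping the `i`-th sign is an involution that negates every term
  refine sum_ninvolution (fun σ => Function.update σ i (!σ i)) (fun σ => ?_) (fun σ _ h => ?_)
    (fun _ => mem_univ _) (fun σ => ?_)
  · simp [Function.update_of_ne hij.symm]
  · simpa using congr_fun h i
  · ext k; by_cases hk : k = i <;> simp [hk]

theorem sum_sq_sum_mul_boolSign (a : ι → ℝ) :
    ∑ σ : ι → Bool, (∑ i, a i * boolSign (σ i)) ^ 2 = 2 ^ Fintype.card ι * ∑ i, a i ^ 2 := by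
  calc ∑ σ : ι → Bool, (∑ i, a i * boolSign (σ i)) ^ 2
      = ∑ i, ∑ j, a i * a j * ∑ σ : ι → Bool, boolSign (σ i) * boolSign (σ j) := by
        simp_rw [sq, sum_mul_sum, mul_sum]
        rw [sum_comm]
        refine sum_congr rfl fun i _ => ?_
        rw [sum_comm]
        exact sum_congr rfl fun j _ => sum_congr rfl fun σ _ => by ring
    _ = ∑ i, a i * a i * 2 ^ Fintype.card ι := by
        refine sum_congr rfl fun i _ => ?_
        rw [Fintype.sum_eq_single i fun j hj => by
          rw [sum_boolSign_mul_boolSign_of_ne (Ne.symm hj), mul_zero]]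
        simp
    _ = 2 ^ Fintype.card ι * ∑ i, a i ^ 2 := by
        rw [mul_sum]; exact sum_congr rfl fun i _ => by ring

theorem sum_abs_sum_mul_boolSign_le (a : ι → ℝ) :
    ∑ σ : ι → Bool, |∑ i, a i * boolSign (σ i)| ≤ 2 ^ Fintype.card ι * √(∑ i, a i ^ 2) := by
  calc ∑ σ : ι → Bool, |∑ i, a i * boolSign (σ i)|
      ≤ √(Fintype.card (ι → Bool) * ∑ σ : ι → Bool, (∑ i, a i * boolSign (σ i)) ^ 2) :=
        sum_abs_le_sqrt_card_mul_sum_sq _ _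
    _ = √((2 ^ Fintype.card ι) ^ 2 * ∑ i, a i ^ 2) := by
        rw [sum_sq_sum_mul_boolSign, Fintype.card_fun, Fintype.card_bool]; push_cast; ring_nf
    _ = 2 ^ Fintype.card ι * √(∑ i, a i ^ 2) := by
        rw [Real.sqrt_mul' _ (sum_nonneg fun i _ => sq_nonneg _), Real.sqrt_sq (by positivity)]

end Rademacher

section Grid

variable {M : Type*} [AddCommMonoid M]

def gridBlock (g : ℕ → ℕ → M) (h r s : ℕ) (p : Fin h × Fin h) : M :=
  g (r * h + 1 + p.1) (s * h + 1 + p.2)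

theorem sum_Icc_one_mul_eq_sum_range_sum_fin (m h : ℕ) (f : ℕ → M) :
    ∑ k ∈ Icc 1 (m * h), f k = ∑ r ∈ range m, ∑ i : Fin h, f (r * h + 1 + i) := by
  induction m with
  | zero => simp
  | succ m ih =>
    rw [sum_range_succ, ← ih, ← Ico_add_one_right_eq_Icc, ← Ico_add_one_right_eq_Icc,
      ← sum_Ico_consecutive f (by omega : 1 ≤ m * h + 1) (by lia : m * h + 1 ≤ (m + 1) * h + 1),
      sum_Ico_eq_sum_range f (m * h + 1), Fin.sum_univ_eq_sum_range (fun i => f (m * h + 1 + i))]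
    congr 3
    lia

theorem sum_grid_eq_sum_gridBlock (m h : ℕ) (g : ℕ → ℕ → M) :
    ∑ k ∈ Icc 1 (m * h), ∑ l ∈ Icc 1 (m * h), g k l =
      ∑ r ∈ range m, ∑ s ∈ range m, ∑ p, gridBlock g h r s p := by
  simp_rw [sum_Icc_one_mul_eq_sum_range_sum_fin, gridBlock, Fintype.sum_prod_type]
  refine sum_congr rfl fun r _ => ?_
  rw [sum_comm]

theorem eq_of_mem_block {h r r' i : ℕ} (hi : i < h) (hlow : r * h + 1 ≤ r' * h + 1 + i)
    (hup : r' * h + 1 + i ≤ (r + 1) * h) : r' = r := by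
  have hr : r < r' + 1 := Nat.lt_of_mul_lt_mul_right (a := h) (by lia)
  have hr' : r' < r + 1 := Nat.lt_of_mul_lt_mul_right (a := h) (by lia)
  omega

theorem sum_grid_eq_sum_gridBlock_of_support {m h r s : ℕ} (hr : r < m) (hs : s < m)
    (g : ℕ → ℕ → M)
    (hg : ∀ k l, ¬(r * h + 1 ≤ k ∧ k ≤ (r + 1) * h ∧ s * h + 1 ≤ l ∧ l ≤ (s + 1) * h) →
      g k l = 0) :
    ∑ k ∈ Icc 1 (m * h), ∑ l ∈ Icc 1 (m * h), g k l = ∑ p, gridBlock g h r s p := by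
  rw [sum_grid_eq_sum_gridBlock, sum_eq_single_of_mem r (mem_range.2 hr),
    sum_eq_single_of_mem s (mem_range.2 hs)]
  · intro s' _ hs'
    refine Fintype.sum_eq_zero _ fun p => hg _ _ fun hmem => hs' ?_
    exact eq_of_mem_block p.2.2 hmem.2.2.1 hmem.2.2.2
  · intro r' _ hr'
    refine sum_eq_zero fun s' _ => Fintype.sum_eq_zero _ fun p => hg _ _ fun hmem => hr' ?_
    exact eq_of_mem_block p.1.2 hmem.1 hmem.2.1

end Grid

theorem sum_sqrt_sum_sq_gridBlock_le (m h : ℕ) (v : ℕ → ℕ → ℝ) :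
    ∑ r ∈ range m, ∑ s ∈ range m, √(∑ p, gridBlock v h r s p ^ 2) ≤
      m * √(∑ k ∈ Icc 1 (m * h), ∑ l ∈ Icc 1 (m * h), v k l ^ 2) := by
  have hv : 0 ≤ ∑ k ∈ Icc 1 (m * h), ∑ l ∈ Icc 1 (m * h), v k l ^ 2 := by positivity
  calc ∑ r ∈ range m, ∑ s ∈ range m, √(∑ p, gridBlock v h r s p ^ 2)
      = ∑ x ∈ range m ×ˢ range m, |√(∑ p, gridBlock v h x.1 x.2 p ^ 2)| := by
        simp_rw [sum_product, abs_of_nonneg (Real.sqrt_nonneg _)]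
    _ ≤ √(#(range m ×ˢ range m) *
          ∑ x ∈ range m ×ˢ range m, √(∑ p, gridBlock v h x.1 x.2 p ^ 2) ^ 2) :=
        sum_abs_le_sqrt_card_mul_sum_sq _ _
    _ = √((m : ℝ) * m * ∑ k ∈ Icc 1 (m * h), ∑ l ∈ Icc 1 (m * h), v k l ^ 2) := by
        simp_rw [Real.sq_sqrt (sum_nonneg fun p _ => sq_nonneg _), sum_product,
          sum_grid_eq_sum_gridBlock m h (fun k l => v k l ^ 2), card_product, card_range]
        push_cast; rfl
    _ = m * √(∑ k ∈ Icc 1 (m * h), ∑ l ∈ Icc 1 (m * h), v k l ^ 2) := by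
        rw [Real.sqrt_mul' _ hv, Real.sqrt_mul_self (Nat.cast_nonneg _)]

theorem sum_abs_sum_grid_mul_le_of_signed_block {m h r s : ℕ} (hr : r < m) (hs : s < m) (c : ℝ)
    (v : ℕ → ℕ → ℝ) (δ : (Fin h × Fin h → Bool) → ℕ → ℕ → ℝ)
    (hδ1 : ∀ σ p, gridBlock (δ σ) h r s p = c * boolSign (σ p))
    (hδ0 : ∀ σ k l, ¬(r * h + 1 ≤ k ∧ k ≤ (r + 1) * h ∧ s * h + 1 ≤ l ∧ l ≤ (s + 1) * h) →
      δ σ k l = 0) :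
    ∑ σ, |∑ k ∈ Icc 1 (m * h), ∑ l ∈ Icc 1 (m * h), δ σ k l * v k l| ≤
      |c| * 2 ^ (h ^ 2) * √(∑ p, gridBlock v h r s p ^ 2) := by
  have inner_eq : ∀ σ, ∑ k ∈ Icc 1 (m * h), ∑ l ∈ Icc 1 (m * h), δ σ k l * v k l =
      c * ∑ p, gridBlock v h r s p * boolSign (σ p) := fun σ => by
    rw [sum_grid_eq_sum_gridBlock_of_support hr hs _
      fun k l hkl => by rw [hδ0 σ k l hkl, zero_mul], mul_sum]
    exact sum_congr rfl fun p _ => by simp only [gridBlock] at hδ1 ⊢; rw [hδ1]; ring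
  simp_rw [inner_eq, abs_mul, ← mul_sum, mul_assoc]
  gcongr
  simpa [sq] using sum_abs_sum_mul_boolSign_le (gridBlock v h r s)

/-- Supplement A.5, upper bound for the multiple-sign update `δ^multiple`: choosing a
uniformly random `h × h` block of the fixed grid partition of the `w × w` image (`w = m·h`)
and independent Rademacher signs of magnitude `2ε` on its entries, the expectation of
`|⟨δ, v⟩|` is at most `2ε·(h/w)·‖v‖₂`. -/
theorem multiple_sign_update_upper_bound
    (h m w : ℕ) (hh : 1 ≤ h) (hm : 1 ≤ m) (hw : w = m * h)
    (ε : ℝ) (hε : 0 < ε)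
    (v : ℕ → ℕ → ℝ)
    (δ : ℕ → ℕ → (Fin h × Fin h → Bool) → ℕ → ℕ → ℝ)
    (hδ1 : ∀ (r s : ℕ) (σ : Fin h × Fin h → Bool) (k l : Fin h),
      δ r s σ (r * h + 1 + (k : ℕ)) (s * h + 1 + (l : ℕ)) =
        2 * ε * (if σ (k, l) then 1 else -1))
    (hδ0 : ∀ (r s : ℕ) (σ : Fin h × Fin h → Bool) (k l : ℕ),
      ¬(r * h + 1 ≤ k ∧ k ≤ (r + 1) * h ∧ s * h + 1 ≤ l ∧ l ≤ (s + 1) * h) →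
        δ r s σ k l = 0) :
    (1 / ((m : ℝ) ^ 2 * 2 ^ (h ^ 2))) *
        ∑ r ∈ Finset.range m, ∑ s ∈ Finset.range m, ∑ σ : Fin h × Fin h → Bool,
          |∑ k ∈ Finset.Icc 1 w, ∑ l ∈ Finset.Icc 1 w, δ r s σ k l * v k l| ≤
      2 * ε * ((h : ℝ) / (w : ℝ)) *
        Real.sqrt (∑ k ∈ Finset.Icc 1 w, ∑ l ∈ Finset.Icc 1 w, (v k l) ^ 2) := by
  subst hw
  have hm0 : (m : ℝ) ≠ 0 := by positivity
  have hh0 : (h : ℝ) ≠ 0 := by positivity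
  have h2ε : |2 * ε| = 2 * ε := abs_of_pos (by positivity)
  calc _ ≤ 1 / ((m : ℝ) ^ 2 * 2 ^ (h ^ 2)) *
          ∑ r ∈ range m, ∑ s ∈ range m, 2 * ε * 2 ^ (h ^ 2) * √(∑ p, gridBlock v h r s p ^ 2) := by
        gcongr with r hr s hs
        rw [← h2ε]
        exact sum_abs_sum_grid_mul_le_of_signed_block (mem_range.1 hr) (mem_range.1 hs) _ v
          (δ r s) (fun σ p => hδ1 r s σ p.1 p.2) (hδ0 r s)
    _ = 1 / ((m : ℝ) ^ 2 * 2 ^ (h ^ 2)) * (2 * ε * 2 ^ (h ^ 2)) *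
          ∑ r ∈ range m, ∑ s ∈ range m, √(∑ p, gridBlock v h r s p ^ 2) := by
        simp_rw [mul_sum, mul_assoc]
    _ ≤ 1 / ((m : ℝ) ^ 2 * 2 ^ (h ^ 2)) * (2 * ε * 2 ^ (h ^ 2)) *
          (m * √(∑ k ∈ Icc 1 (m * h), ∑ l ∈ Icc 1 (m * h), v k l ^ 2)) := by
        gcongr
        exact sum_sqrt_sum_sq_gridBlock_le m h v
    _ = _ := by push_cast; field_simp
end

section
/- Let w, h, c be positive integers with h ≤ w, and index pixels by ZMod w × ZMod w (wraparound indexing). For v ∈ ℝ^{ZMod w × ZMod w × Fin c} and a window position (r, s) ∈ ZMod w × ZMod w, let V_{(r,s)} ∈ ℝ^{ZMod w × ZMod w × Fin c} agree with v at all coordinates (r+k, s+l, i) with k, l ∈ Fin h and i ∈ Fin c, and equal 0 elsewhere. Then (1/w²) · Σ_{(r,s) ∈ ZMod w × ZMod w} ‖V_{(r,s)}‖₂ ≥ (h²/w²) · ‖v‖₂. -/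
/-!
The translates `r + W` of a window `W` in a finite group `G` cover every point exactly `#W`
times, so the window restrictions `V_r` of `v` sum to `#W • v`. The triangle inequality for the
Euclidean norm (Jensen's inequality for the average over `r`) then gives
`#W · ‖v‖ ≤ ∑ᵣ ‖V_r‖`; the wraparound `h × h` window in `ZMod w × ZMod w` has `#W = h²`
because `h ≤ w`.
-/

open Finset

theorem norm_toLp_two_eq_sqrt_sum_sq {ι : Type*} [Fintype ι] (f : ι → ℝ) :
    ‖WithLp.toLp 2 f‖ = √(∑ i, f i ^ 2) := by
  simp only [EuclideanSpace.norm_eq, Real.norm_eq_abs, sq_abs]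

theorem mul_norm_le_sum_norm_of_sum_eq_smul {ι E : Type*} [SeminormedAddCommGroup E]
    [NormedSpace ℝ E] (s : Finset ι) (V : ι → E) {t : ℝ} (ht : 0 ≤ t) {x : E}
    (hsum : ∑ i ∈ s, V i = t • x) : t * ‖x‖ ≤ ∑ i ∈ s, ‖V i‖ := by
  calc t * ‖x‖ = ‖t • x‖ := by rw [norm_smul, Real.norm_of_nonneg ht]
    _ = ‖∑ i ∈ s, V i‖ := by rw [hsum]
    _ ≤ ∑ i ∈ s, ‖V i‖ := norm_sum_le s V

section Window

variable {G κ : Type*} [AddGroup G] [Fintype G] [DecidableEq G]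

theorem sum_ite_sub_mem_eq_card_nsmul {M : Type*} [AddCommMonoid M] (W : Finset G) (a : G)
    (x : M) : ∑ r : G, (if a - r ∈ W then x else 0) = #W • x := by
  refine (Equiv.sum_comp (Equiv.subLeft a) fun u => if u ∈ W then x else 0).trans ?_
  rw [sum_ite_mem, univ_inter, sum_const]

def windowRestrict (W : Finset G) (pos : κ → G) (r : G) (v : κ → ℝ) : κ → ℝ :=
  fun q => if pos q - r ∈ W then v q else 0

theorem sum_windowRestrict (W : Finset G) (pos : κ → G) (v : κ → ℝ) :
    ∑ r : G, windowRestrict W pos r v = (#W : ℝ) • v := by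
  ext q
  simp only [Finset.sum_apply, windowRestrict, sum_ite_sub_mem_eq_card_nsmul, Pi.smul_apply,
    nsmul_eq_mul, smul_eq_mul]

theorem card_mul_sqrt_sum_sq_le_sum_windowRestrict [Fintype κ] (W : Finset G) (pos : κ → G)
    (v : κ → ℝ) :
    #W * √(∑ q, v q ^ 2) ≤ ∑ r : G, √(∑ q, windowRestrict W pos r v q ^ 2) := by
  simp only [← norm_toLp_two_eq_sqrt_sum_sq]
  refine mul_norm_le_sum_norm_of_sum_eq_smul _ _ (Nat.cast_nonneg _) ?_
  rw [← WithLp.toLp_sum, sum_windowRestrict, WithLp.toLp_smul]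

end Window

theorem natCast_fin_zmod_injective {h w : ℕ} (hhw : h ≤ w) :
    Function.Injective (fun k : Fin h => ((k : ℕ) : ZMod w)) := by
  intro k k' hkk
  have hval := congrArg ZMod.val hkk
  simp only [ZMod.val_cast_of_lt (k.2.trans_le hhw), ZMod.val_cast_of_lt (k'.2.trans_le hhw)]
    at hval
  exact Fin.ext hval

def squareWindow (w h : ℕ) : Finset (ZMod w × ZMod w) :=
  (univ.image fun k : Fin h => ((k : ℕ) : ZMod w)) ×ˢ
    (univ.image fun l : Fin h => ((l : ℕ) : ZMod w))

theorem card_squareWindow {w h : ℕ} (hhw : h ≤ w) : #(squareWindow w h) = h ^ 2 := by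
  rw [squareWindow, card_product, card_image_of_injective _ (natCast_fin_zmod_injective hhw),
    card_univ, Fintype.card_fin, sq]

theorem sub_mem_squareWindow_iff {w h : ℕ} (a b r s : ZMod w) :
    (a, b) - (r, s) ∈ squareWindow w h ↔
      ∃ k l : Fin h, a = r + ((k : ℕ) : ZMod w) ∧ b = s + ((l : ℕ) : ZMod w) := by
  simp only [squareWindow, Prod.mk_sub_mk, mem_product, mem_image, mem_univ, true_and,
    eq_sub_iff_add_eq', eq_comm (a := a), eq_comm (a := b), exists_and_left, exists_and_right]

theorem window_restriction_jensen_general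
    (w h c : ℕ) [NeZero w] (hhw : h ≤ w)
    (v : ZMod w × ZMod w × Fin c → ℝ)
    (V : ZMod w → ZMod w → ZMod w × ZMod w × Fin c → ℝ)
    (hV1 : ∀ (r s : ZMod w) (k l : Fin h) (i : Fin c),
      V r s (r + ((k : ℕ) : ZMod w), s + ((l : ℕ) : ZMod w), i) =
        v (r + ((k : ℕ) : ZMod w), s + ((l : ℕ) : ZMod w), i))
    (hV0 : ∀ (r s a b : ZMod w) (i : Fin c),
      (∀ k l : Fin h, ¬(a = r + ((k : ℕ) : ZMod w) ∧ b = s + ((l : ℕ) : ZMod w))) →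
        V r s (a, b, i) = 0) :
    (1 / (w : ℝ) ^ 2) * ∑ r : ZMod w, ∑ s : ZMod w,
        Real.sqrt (∑ q : ZMod w × ZMod w × Fin c, (V r s q) ^ 2) ≥
      ((h : ℝ) ^ 2 / (w : ℝ) ^ 2) *
        Real.sqrt (∑ q : ZMod w × ZMod w × Fin c, (v q) ^ 2) := by
  set pos : ZMod w × ZMod w × Fin c → ZMod w × ZMod w := fun q => (q.1, q.2.1)
  have hV : ∀ r s, V r s = windowRestrict (squareWindow w h) pos (r, s) v := by
    intro r s
    funext ⟨a, b, i⟩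
    rw [windowRestrict]
    split_ifs with hmem
    · obtain ⟨k, l, rfl, rfl⟩ := (sub_mem_squareWindow_iff a b r s).1 hmem
      exact hV1 r s k l i
    · exact hV0 r s a b i fun k l hkl ↦ hmem ((sub_mem_squareWindow_iff a b r s).2 ⟨k, l, hkl⟩)
  have hjensen := card_mul_sqrt_sum_sq_le_sum_windowRestrict (squareWindow w h) pos v
  rw [card_squareWindow hhw, Nat.cast_pow] at hjensen
  rw [ge_iff_le, div_mul_eq_mul_div, one_div_mul_eq_div, ← Fintype.sum_prod_type']
  gcongr ?_ / _
  simpa only [hV] using hjensen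

/-- Supplement A.4, the Jensen-inequality step: with wraparound indexing (`ZMod w`), if
`V_{(r,s)}` agrees with `v` on the `h × h` window at position `(r,s)` (in every channel)
and vanishes elsewhere, then the average over all window positions of `‖V_{(r,s)}‖₂` is at
least `(h²/w²)·‖v‖₂`. -/
theorem window_restriction_jensen
    (w h c : ℕ) [NeZero w] (hh : 0 < h) (hc : 0 < c) (hhw : h ≤ w)
    (v : ZMod w × ZMod w × Fin c → ℝ)
    (V : ZMod w → ZMod w → ZMod w × ZMod w × Fin c → ℝ)
    (hV1 : ∀ (r s : ZMod w) (k l : Fin h) (i : Fin c),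
      V r s (r + ((k : ℕ) : ZMod w), s + ((l : ℕ) : ZMod w), i) =
        v (r + ((k : ℕ) : ZMod w), s + ((l : ℕ) : ZMod w), i))
    (hV0 : ∀ (r s a b : ZMod w) (i : Fin c),
      (∀ k l : Fin h, ¬(a = r + ((k : ℕ) : ZMod w) ∧ b = s + ((l : ℕ) : ZMod w))) →
        V r s (a, b, i) = 0) :
    (1 / (w : ℝ) ^ 2) * ∑ r : ZMod w, ∑ s : ZMod w,
        Real.sqrt (∑ q : ZMod w × ZMod w × Fin c, (V r s q) ^ 2) ≥
      ((h : ℝ) ^ 2 / (w : ℝ) ^ 2) *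
        Real.sqrt (∑ q : ZMod w × ZMod w × Fin c, (v q) ^ 2) :=
  window_restriction_jensen_general w h c hhw v V hV1 hV0
end
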